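/- arXiv:1909.11910 — 3 statements merged into one kernel-verified Lean document; each statement's English description precedes it below -/
import Mathlib

section
/- Let F : [0,∞)² → [0,∞) be a continuous metric preserving function, let 0 ≤ s < s_1 and 0 ≤ t < t_1 be real numbers, and set r := √(s_1² − s²)/2 and ρ := √(t_1² − t²)/2. Define α := min { F(u,v) : s ≤ u ≤ s_1, 0 ≤ v ≤ 2ρ }, β := min { F(u,v) : 0 ≤ u ≤ 2r, t ≤ v ≤ t_1 }, and γ := min { F(u,v) : s ≤ u ≤ s_1, t ≤ v ≤ t_1 }. Then (α, β, γ) is a triangle triplet. -/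
open MeasureTheory Filter Topology NNReal ENNReal TopologicalSpace

noncomputable section

/-- A function `F : [0,∞)^N → [0,∞)` is metric preserving if for any `N` metric
spaces `X i`, the function `dF x y = F (fun i => dist (x i) (y i))` is a metric on `∀ i, X i`. -/
def IsMetricPreservingN (N : ℕ) (F : (Fin N → ℝ≥0) → ℝ≥0) : Prop :=
  ∀ (X : Fin N → Type) [∀ i, MetricSpace (X i)],
    (∀ x y : (i : Fin N) → X i, (F (fun i => nndist (x i) (y i)) = 0 ↔ x = y)) ∧
    (∀ x y : (i : Fin N) → X i,
      F (fun i => nndist (x i) (y i)) = F (fun i => nndist (y i) (x i))) ∧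
    (∀ x y z : (i : Fin N) → X i,
      F (fun i => nndist (x i) (z i)) ≤
        F (fun i => nndist (x i) (y i)) + F (fun i => nndist (y i) (z i)))

/-- A function `F : [0,∞)² → [0,∞)` is metric preserving if for any two metric spaces
`X`, `Y`, the function `dF p q = F (dist p.1 q.1) (dist p.2 q.2)` is a metric on `X × Y`. -/
def IsMetricPreserving2 (F : ℝ≥0 → ℝ≥0 → ℝ≥0) : Prop :=
  ∀ (X Y : Type) [MetricSpace X] [MetricSpace Y],
    (∀ p q : X × Y, (F (nndist p.1 q.1) (nndist p.2 q.2) = 0 ↔ p = q)) ∧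
    (∀ p q : X × Y,
      F (nndist p.1 q.1) (nndist p.2 q.2) = F (nndist q.1 p.1) (nndist q.2 p.2)) ∧
    (∀ p q r : X × Y,
      F (nndist p.1 r.1) (nndist p.2 r.2) ≤
        F (nndist p.1 q.1) (nndist p.2 q.2) + F (nndist q.1 r.1) (nndist q.2 r.2))

/-- A function `f : [0,∞) → [0,∞)` is metric preserving if for any metric space `X`,
`f ∘ dist` is a metric on `X`. -/
def IsMetricPreserving1 (f : ℝ≥0 → ℝ≥0) : Prop :=
  ∀ (X : Type) [MetricSpace X],
    (∀ x y : X, (f (nndist x y) = 0 ↔ x = y)) ∧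
    (∀ x y : X, f (nndist x y) = f (nndist y x)) ∧
    (∀ x y z : X, f (nndist x z) ≤ f (nndist x y) + f (nndist y z))

/-- Diameter of a set with respect to an explicitly given distance function. -/
def diamD {α : Type*} (d : α → α → ℝ) (A : Set α) : ℝ≥0∞ :=
  ⨆ (x : α) (_ : x ∈ A) (y : α) (_ : y ∈ A), ENNReal.ofReal (d x y)

/-- Partial diameter `diam(μ; a)`: the infimum of diameters of Borel sets of measure at
least `a`, with respect to an explicitly given distance function. -/
def partialDiamD {α : Type*} [MeasurableSpace α] (d : α → α → ℝ) (μ : Measure α) (a : ℝ) :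
    ℝ≥0∞ :=
  ⨅ (A : Set α) (_ : MeasurableSet A ∧ ENNReal.ofReal a ≤ μ A), diamD d A

/-- Observable diameter `ObsDiam((α,d,μ); -κ)` with respect to an explicitly given
distance function `d`. -/
def obsDiamD {α : Type*} [MeasurableSpace α] (d : α → α → ℝ) (μ : Measure α) (κ : ℝ) :
    ℝ≥0∞ :=
  ⨆ (f : α → ℝ) (_ : Measurable f ∧ ∀ x y, |f x - f y| ≤ d x y),
    partialDiamD (fun a b : ℝ => dist a b) (μ.map f) (1 - κ)

/-- Concentration function `α_{(α,d,μ)}(r)` with respect to an explicitly given distance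
function `d`. -/
def concFnD {α : Type*} [MeasurableSpace α] (d : α → α → ℝ) (μ : Measure α) (r : ℝ) :
    ℝ≥0∞ :=
  ⨆ (A : Set α) (_ : MeasurableSet A ∧ ENNReal.ofReal (1 / 2) ≤ μ A),
    1 - μ {x | ∃ a ∈ A, d x a < r}

/-- The λ-Prokhorov distance between Borel probability measures, with respect to an
explicitly given distance function `d` (so that `U_ε(A) = {x | ∃ a ∈ A, d x a < ε}`). -/
def prokDistD {α : Type*} [MeasurableSpace α] (d : α → α → ℝ) (lam : ℝ)
    (μ ν : Measure α) : ℝ :=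
  sInf {ε : ℝ | 0 < ε ∧ ∀ A : Set α, MeasurableSet A →
    ν A ≤ μ {x | ∃ a ∈ A, d x a < ε} + ENNReal.ofReal (lam * ε)}

/-- The box distance between `(α, dα, μ)` and `(β, dβ, ν)`, with explicitly given
distance functions. A parameter of `(α, μ)` is a measurable map `φ : [0,1) → α`
pushing the Lebesgue measure forward to `μ`. -/
def boxDistD {α β : Type*} [MeasurableSpace α] [MeasurableSpace β]
    (dα : α → α → ℝ) (dβ : β → β → ℝ) (μ : Measure α) (ν : Measure β) : ℝ :=
  sInf {ε : ℝ | 0 ≤ ε ∧ ∃ (φ : ℝ → α) (ψ : ℝ → β), Measurable φ ∧ Measurable ψ ∧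
    (volume.restrict (Set.Ico (0 : ℝ) 1)).map φ = μ ∧
    (volume.restrict (Set.Ico (0 : ℝ) 1)).map ψ = ν ∧
    ∃ I₀ : Set ℝ, I₀ ⊆ Set.Ico (0 : ℝ) 1 ∧ MeasurableSet I₀ ∧
      ENNReal.ofReal (1 - ε) ≤ volume I₀ ∧
      ∀ s ∈ I₀, ∀ t ∈ I₀, |dα (φ s) (φ t) - dβ (ψ s) (ψ t)| ≤ ε}

/-- The value `F_p^N(s_1, …, s_N)`: the `l_p` combination of nonnegative reals. -/
def lpVal (p : ℝ≥0∞) {N : ℕ} (s : Fin N → ℝ≥0) : ℝ≥0 :=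
  if p = ∞ then Finset.univ.sup s else (∑ i, s i ^ p.toReal) ^ (1 / p.toReal)

/-- Distance between two sets with respect to an explicitly given distance function. -/
def setDistD {α β : Type*} (d : α → β → ℝ) (A : Set α) (B : Set β) : ℝ :=
  sInf (Set.image2 d A B)

end

noncomputable section AuxMTT

noncomputable section AuxMTT

/-- distance matrix on three points: d(0,1)=c, d(0,2)=b, d(1,2)=a. -/
def tdMTT (a b c : ℝ≥0) : Fin 3 → Fin 3 → ℝ := fun i j =>
  if i = j then 0
  else if i.val + j.val = 1 then (c : ℝ)
  else if i.val + j.val = 2 then (b : ℝ)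
  else (a : ℝ)

def triMetricMTT (a b c : ℝ≥0) (ha : 0 < a) (hb : 0 < b) (hc : 0 < c)
    (h1 : a ≤ b + c) (h2 : b ≤ a + c) (h3 : c ≤ a + b) : MetricSpace (Fin 3) where
  dist := tdMTT a b c
  dist_self x := by fin_cases x <;> simp [tdMTT]
  dist_comm x y := by fin_cases x <;> fin_cases y <;> norm_num [tdMTT, Fin.ext_iff]
  dist_triangle x y z := by
    have H1 : (a : ℝ) ≤ (b : ℝ) + (c : ℝ) := by exact_mod_cast h1
    have H2 : (b : ℝ) ≤ (a : ℝ) + (c : ℝ) := by exact_mod_cast h2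
    have H3 : (c : ℝ) ≤ (a : ℝ) + (b : ℝ) := by exact_mod_cast h3
    have Ha : (0:ℝ) < a := ha
    have Hb : (0:ℝ) < b := hb
    have Hc : (0:ℝ) < c := hc
    fin_cases x <;> fin_cases y <;> fin_cases z <;>
      norm_num [tdMTT, Fin.ext_iff] <;> linarith
  eq_of_dist_eq_zero {x y} h := by
    fin_cases x <;> fin_cases y <;>
      norm_num [tdMTT, Fin.ext_iff] at h ⊢ <;>
      first
        | exact absurd h ha.ne'
        | exact absurd h hb.ne'
        | exact absurd h hc.ne'

lemma triMetricMTT_nndist (a b c : ℝ≥0) (ha : 0 < a) (hb : 0 < b) (hc : 0 < c)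
    (h1 : a ≤ b + c) (h2 : b ≤ a + c) (h3 : c ≤ a + b) :
    (@nndist _ (@PseudoMetricSpace.toNNDist _
        (triMetricMTT a b c ha hb hc h1 h2 h3).toPseudoMetricSpace) 0 1 = c)
    ∧ (@nndist _ (@PseudoMetricSpace.toNNDist _
        (triMetricMTT a b c ha hb hc h1 h2 h3).toPseudoMetricSpace) 0 2 = b)
    ∧ (@nndist _ (@PseudoMetricSpace.toNNDist _
        (triMetricMTT a b c ha hb hc h1 h2 h3).toPseudoMetricSpace) 1 2 = a) := by
  refine ⟨?_, ?_, ?_⟩ <;> apply NNReal.coe_injective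
  · show tdMTT a b c 0 1 = (c : ℝ)
    norm_num [tdMTT, Fin.ext_iff]
  · show tdMTT a b c 0 2 = (b : ℝ)
    norm_num [tdMTT, Fin.ext_iff]
  · show tdMTT a b c 1 2 = (a : ℝ)
    norm_num [tdMTT, Fin.ext_iff]


lemma keyMTT_pos (F : ℝ≥0 → ℝ≥0 → ℝ≥0) (hF : IsMetricPreserving2 F)
    {a b c a' b' c' : ℝ≥0} (ha : 0 < a) (hb : 0 < b) (hc : 0 < c)
    (ha' : 0 < a') (hb' : 0 < b') (hc' : 0 < c')
    (h1 : a ≤ b + c) (h2 : b ≤ a + c) (h3 : c ≤ a + b)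
    (h1' : a' ≤ b' + c') (h2' : b' ≤ a' + c') (h3' : c' ≤ a' + b') :
    F a a' ≤ F b b' + F c c' := by
  have k1 : a ≤ c + b := by rwa [add_comm]
  have k2 : b ≤ c + a := by rwa [add_comm]
  have k1' : a' ≤ c' + b' := by rwa [add_comm]
  have k2' : b' ≤ c' + a' := by rwa [add_comm]
  have hF' : ∀ (X Y : Type) [MetricSpace X] [MetricSpace Y],
      (∀ p q : X × Y, (F (nndist p.1 q.1) (nndist p.2 q.2) = 0 ↔ p = q)) ∧
      (∀ p q : X × Y,
        F (nndist p.1 q.1) (nndist p.2 q.2) = F (nndist q.1 p.1) (nndist q.2 p.2)) ∧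
      (∀ p q r : X × Y,
        F (nndist p.1 r.1) (nndist p.2 r.2) ≤
          F (nndist p.1 q.1) (nndist p.2 q.2) + F (nndist q.1 r.1) (nndist q.2 r.2)) := hF
  obtain ⟨-, -, htri⟩ := @hF' (Fin 3) (Fin 3)
    (triMetricMTT c a b hc ha hb h3 k1 k2) (triMetricMTT c' a' b' hc' ha' hb' h3' k1' k2')
  have h := htri (0, 0) (1, 1) (2, 2)
  obtain ⟨e1, e2, e3⟩ := triMetricMTT_nndist c a b hc ha hb h3 k1 k2
  obtain ⟨e1', e2', e3'⟩ := triMetricMTT_nndist c' a' b' hc' ha' hb' h3' k1' k2'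
  simp only [e1, e2, e3, e1', e2', e3'] at h
  exact h

lemma keyMTT (F : ℝ≥0 → ℝ≥0 → ℝ≥0) (hF : IsMetricPreserving2 F)
    (hFc : Continuous fun p : ℝ≥0 × ℝ≥0 => F p.1 p.2)
    {a b c a' b' c' : ℝ≥0}
    (h1 : a ≤ b + c) (h2 : b ≤ a + c) (h3 : c ≤ a + b)
    (h1' : a' ≤ b' + c') (h2' : b' ≤ a' + c') (h3' : c' ≤ a' + b') :
    F a a' ≤ F b b' + F c c' := by
  have main : ∀ ε : ℝ≥0, 0 < ε →
      F (a + ε) (a' + ε) ≤ F (b + ε) (b' + ε) + F (c + ε) (c' + ε) := by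
    intro ε hε
    refine keyMTT_pos F hF (by positivity) (by positivity) (by positivity)
      (by positivity) (by positivity) (by positivity) ?_ ?_ ?_ ?_ ?_ ?_
    · calc a + ε ≤ (b + c) + ε := add_le_add_left h1 _
        _ ≤ (b + ε) + (c + ε) := by rw [add_assoc]; gcongr; exact le_self_add
    · calc b + ε ≤ (a + c) + ε := add_le_add_left h2 _
        _ ≤ (a + ε) + (c + ε) := by rw [add_assoc]; gcongr; exact le_self_add
    · calc c + ε ≤ (a + b) + ε := add_le_add_left h3 _
        _ ≤ (a + ε) + (b + ε) := by rw [add_assoc]; gcongr; exact le_self_add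
    · calc a' + ε ≤ (b' + c') + ε := add_le_add_left h1' _
        _ ≤ (b' + ε) + (c' + ε) := by rw [add_assoc]; gcongr; exact le_self_add
    · calc b' + ε ≤ (a' + c') + ε := add_le_add_left h2' _
        _ ≤ (a' + ε) + (c' + ε) := by rw [add_assoc]; gcongr; exact le_self_add
    · calc c' + ε ≤ (a' + b') + ε := add_le_add_left h3' _
        _ ≤ (a' + ε) + (b' + ε) := by rw [add_assoc]; gcongr; exact le_self_add
  have cont : ∀ x y : ℝ≥0, Tendsto (fun ε : ℝ≥0 => F (x + ε) (y + ε)) (𝓝[>] 0)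
      (𝓝 (F x y)) := by
    intro x y
    have hcont : Continuous fun ε : ℝ≥0 => F (x + ε) (y + ε) := by
      show Continuous ((fun p : ℝ≥0 × ℝ≥0 => F p.1 p.2) ∘ fun ε : ℝ≥0 => (x + ε, y + ε))
      exact hFc.comp (by fun_prop)
    have h0 : Tendsto (fun ε : ℝ≥0 => F (x + ε) (y + ε)) (𝓝[>] 0) (𝓝 (F (x + 0) (y + 0))) :=
      (hcont.tendsto 0).mono_left nhdsWithin_le_nhds
    simpa using h0
  have t1 := cont a a'
  have t2 : Tendsto (fun ε : ℝ≥0 => F (b + ε) (b' + ε) + F (c + ε) (c' + ε)) (𝓝[>] 0)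
      (𝓝 (F b b' + F c c')) := (cont b b').add (cont c c')
  exact le_of_tendsto_of_tendsto t1 t2
    (eventually_nhdsWithin_of_forall fun ε hε => main ε hε)

lemma sqrtFactsMTT {x y : ℝ≥0} (h : x ≤ y) :
    NNReal.sqrt (y ^ 2 - x ^ 2) ≤ y ∧ y - x ≤ NNReal.sqrt (y ^ 2 - x ^ 2) := by
  constructor
  · rw [NNReal.sqrt_le_iff_le_sq]
    exact tsub_le_self
  · rw [NNReal.le_sqrt_iff_sq_le]
    have hx2 : x ^ 2 ≤ y ^ 2 := pow_le_pow_left₀ (zero_le) h 2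
    rw [le_tsub_iff_right hx2, ← NNReal.coe_le_coe]
    push_cast [NNReal.coe_sub h]
    nlinarith [NNReal.coe_le_coe.mpr h, x.coe_nonneg]

lemma minAttainedMTT (F : ℝ≥0 → ℝ≥0 → ℝ≥0)
    (hFc : Continuous fun p : ℝ≥0 × ℝ≥0 => F p.1 p.2)
    (K : Set (ℝ≥0 × ℝ≥0)) (hK : IsCompact K) (hne : K.Nonempty) :
    ∃ p ∈ K, sInf ((fun p : ℝ≥0 × ℝ≥0 => F p.1 p.2) '' K) = F p.1 p.2 := by
  obtain ⟨q, hq, he⟩ := (hK.image hFc).sInf_mem (hne.image _)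
  exact ⟨q, hq, he.symm⟩

lemma tripletMinMTT {x y M : ℝ≥0} (hx : x ≤ M) (hy : y ≤ M) :
    min (x + y) M ≤ x + y ∧ x ≤ min (x + y) M + y ∧ y ≤ min (x + y) M + x := by
  refine ⟨min_le_left _ _, ?_, ?_⟩ <;> rcases le_total (x + y) M with h | h
  · rw [min_eq_left h]; exact le_self_add.trans le_self_add
  · rw [min_eq_right h]; exact hx.trans le_self_add
  · rw [min_eq_left h]; exact le_add_self.trans le_self_add
  · rw [min_eq_right h]; exact hy.trans le_self_add

lemma tripletAbsMTT (x y : ℝ≥0) :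
    (x - y) ⊔ (y - x) ≤ x + y ∧ x ≤ ((x - y) ⊔ (y - x)) + y ∧
      y ≤ ((x - y) ⊔ (y - x)) + x :=
  ⟨sup_le (tsub_le_self.trans le_self_add) (tsub_le_self.trans le_add_self),
   le_trans le_tsub_add (add_le_add_left le_sup_left _),
   le_trans le_tsub_add (add_le_add_left le_sup_right _)⟩

end AuxMTT

/-- Let `F` be a continuous metric preserving function on `[0,∞)²`,
`0 ≤ s < s₁`, `0 ≤ t < t₁`, `r = √(s₁² - s²)/2`, `ρ = √(t₁² - t²)/2`, and let
`α = inf {F u v | s ≤ u ≤ s₁, 0 ≤ v ≤ 2ρ}`, `β = inf {F u v | 0 ≤ u ≤ 2r, t ≤ v ≤ t₁}`,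
`γ = inf {F u v | s ≤ u ≤ s₁, t ≤ v ≤ t₁}`. Then `(α, β, γ)` is a triangle triplet. -/
theorem minima_triangle_triplet (F : ℝ≥0 → ℝ≥0 → ℝ≥0)
    (hF : IsMetricPreserving2 F)
    (hFc : Continuous fun p : ℝ≥0 × ℝ≥0 => F p.1 p.2)
    (s s₁ t t₁ : ℝ≥0) (hs : s < s₁) (ht : t < t₁)
    (r ρ α β γ : ℝ≥0)
    (hr : r = NNReal.sqrt (s₁ ^ 2 - s ^ 2) / 2)
    (hρ : ρ = NNReal.sqrt (t₁ ^ 2 - t ^ 2) / 2)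
    (hα : α = sInf {x : ℝ≥0 | ∃ u v : ℝ≥0, s ≤ u ∧ u ≤ s₁ ∧ v ≤ 2 * ρ ∧ x = F u v})
    (hβ : β = sInf {x : ℝ≥0 | ∃ u v : ℝ≥0, u ≤ 2 * r ∧ t ≤ v ∧ v ≤ t₁ ∧ x = F u v})
    (hγ : γ = sInf {x : ℝ≥0 | ∃ u v : ℝ≥0, s ≤ u ∧ u ≤ s₁ ∧ t ≤ v ∧ v ≤ t₁ ∧ x = F u v}) :
    α ≤ β + γ ∧ β ≤ α + γ ∧ γ ≤ α + β := by
  have hss : s ≤ s₁ := hs.le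
  have htt : t ≤ t₁ := ht.le
  obtain ⟨hDs_le, hDs_ge⟩ := sqrtFactsMTT hss
  obtain ⟨hDt_le, hDt_ge⟩ := sqrtFactsMTT htt
  have h2r : 2 * r = NNReal.sqrt (s₁ ^ 2 - s ^ 2) := by
    rw [hr, mul_comm, div_mul_cancel₀ _ (two_ne_zero)]
  have h2ρ : 2 * ρ = NNReal.sqrt (t₁ ^ 2 - t ^ 2) := by
    rw [hρ, mul_comm, div_mul_cancel₀ _ (two_ne_zero)]
  have h2r_le : 2 * r ≤ s₁ := h2r ▸ hDs_le
  have h2r_ge : s₁ - s ≤ 2 * r := h2r ▸ hDs_ge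
  have h2ρ_le : 2 * ρ ≤ t₁ := h2ρ ▸ hDt_le
  have h2ρ_ge : t₁ - t ≤ 2 * ρ := h2ρ ▸ hDt_ge
  have eα : {x : ℝ≥0 | ∃ u v : ℝ≥0, s ≤ u ∧ u ≤ s₁ ∧ v ≤ 2 * ρ ∧ x = F u v}
      = (fun p : ℝ≥0 × ℝ≥0 => F p.1 p.2) '' (Set.Icc s s₁ ×ˢ Set.Icc 0 (2 * ρ)) := by
    ext x
    constructor
    · rintro ⟨u, v, h1, h2, h3, rfl⟩
      exact ⟨(u, v), ⟨⟨h1, h2⟩, ⟨zero_le, h3⟩⟩, rfl⟩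
    · rintro ⟨⟨u, v⟩, ⟨⟨h1, h2⟩, ⟨-, h3⟩⟩, rfl⟩
      exact ⟨u, v, h1, h2, h3, rfl⟩
  have eβ : {x : ℝ≥0 | ∃ u v : ℝ≥0, u ≤ 2 * r ∧ t ≤ v ∧ v ≤ t₁ ∧ x = F u v}
      = (fun p : ℝ≥0 × ℝ≥0 => F p.1 p.2) '' (Set.Icc 0 (2 * r) ×ˢ Set.Icc t t₁) := by
    ext x
    constructor
    · rintro ⟨u, v, h1, h2, h3, rfl⟩
      exact ⟨(u, v), ⟨⟨zero_le, h1⟩, ⟨h2, h3⟩⟩, rfl⟩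
    · rintro ⟨⟨u, v⟩, ⟨⟨-, h1⟩, ⟨h2, h3⟩⟩, rfl⟩
      exact ⟨u, v, h1, h2, h3, rfl⟩
  have eγ : {x : ℝ≥0 | ∃ u v : ℝ≥0, s ≤ u ∧ u ≤ s₁ ∧ t ≤ v ∧ v ≤ t₁ ∧ x = F u v}
      = (fun p : ℝ≥0 × ℝ≥0 => F p.1 p.2) '' (Set.Icc s s₁ ×ˢ Set.Icc t t₁) := by
    ext x
    constructor
    · rintro ⟨u, v, h1, h2, h3, h4, rfl⟩
      exact ⟨(u, v), ⟨⟨h1, h2⟩, ⟨h3, h4⟩⟩, rfl⟩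
    · rintro ⟨⟨u, v⟩, ⟨⟨h1, h2⟩, ⟨h3, h4⟩⟩, rfl⟩
      exact ⟨u, v, h1, h2, h3, h4, rfl⟩
  obtain ⟨⟨uα, vα⟩, ⟨⟨huα1, huα2⟩, -, hvα2⟩, hαv⟩ := minAttainedMTT F hFc _
    (isCompact_Icc.prod isCompact_Icc) ⟨(s, 0), ⟨le_rfl, hss⟩, zero_le, zero_le⟩
  obtain ⟨⟨uβ, vβ⟩, ⟨⟨-, huβ2⟩, hvβ1, hvβ2⟩, hβv⟩ := minAttainedMTT F hFc _
    (isCompact_Icc.prod isCompact_Icc) ⟨(0, t), ⟨le_rfl, zero_le⟩, le_rfl, htt⟩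
  obtain ⟨⟨uγ, vγ⟩, ⟨⟨huγ1, huγ2⟩, hvγ1, hvγ2⟩, hγv⟩ := minAttainedMTT F hFc _
    (isCompact_Icc.prod isCompact_Icc) ⟨(s, t), ⟨le_rfl, hss⟩, le_rfl, htt⟩
  have hα' : α = F uα vα := by rw [hα, eα]; exact hαv
  have hβ' : β = F uβ vβ := by rw [hβ, eβ]; exact hβv
  have hγ' : γ = F uγ vγ := by rw [hγ, eγ]; exact hγv
  have boundα : ∀ u v : ℝ≥0, s ≤ u → u ≤ s₁ → v ≤ 2 * ρ → α ≤ F u v := by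
    intro u v h1 h2 h3
    rw [hα]; exact csInf_le (OrderBot.bddBelow _) ⟨u, v, h1, h2, h3, rfl⟩
  have boundβ : ∀ u v : ℝ≥0, u ≤ 2 * r → t ≤ v → v ≤ t₁ → β ≤ F u v := by
    intro u v h1 h2 h3
    rw [hβ]; exact csInf_le (OrderBot.bddBelow _) ⟨u, v, h1, h2, h3, rfl⟩
  have boundγ : ∀ u v : ℝ≥0, s ≤ u → u ≤ s₁ → t ≤ v → v ≤ t₁ → γ ≤ F u v := by
    intro u v h1 h2 h3 h4
    rw [hγ]; exact csInf_le (OrderBot.bddBelow _) ⟨u, v, h1, h2, h3, h4, rfl⟩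
  refine ⟨?_, ?_, ?_⟩
  · -- α ≤ β + γ
    set u := min (uβ + uγ) s₁ with hu
    set v := (vβ - vγ) ⊔ (vγ - vβ) with hv
    obtain ⟨ht1, ht2, ht3⟩ := tripletMinMTT (huβ2.trans h2r_le) huγ2
    obtain ⟨hs1, hs2, hs3⟩ := tripletAbsMTT vβ vγ
    have hαle : α ≤ F u v := by
      refine boundα u v (le_min (huγ1.trans le_add_self) hss) (min_le_right _ _) ?_
      refine sup_le ?_ ?_
      · exact (tsub_le_tsub hvβ2 hvγ1).trans h2ρ_ge
      · exact (tsub_le_tsub hvγ2 hvβ1).trans h2ρ_ge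
    calc α ≤ F u v := hαle
      _ ≤ F uβ vβ + F uγ vγ := keyMTT F hF hFc ht1 ht2 ht3 hs1 hs2 hs3
      _ = β + γ := by rw [hβ', hγ']
  · -- β ≤ α + γ
    set u := (uα - uγ) ⊔ (uγ - uα) with hu
    set v := min (vα + vγ) t₁ with hv
    obtain ⟨ht1, ht2, ht3⟩ := tripletAbsMTT uα uγ
    obtain ⟨hs1, hs2, hs3⟩ := tripletMinMTT (hvα2.trans h2ρ_le) hvγ2
    have hβle : β ≤ F u v := by
      refine boundβ u v ?_ (le_min (hvγ1.trans le_add_self) htt) (min_le_right _ _)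
      refine sup_le ?_ ?_
      · exact (tsub_le_tsub huα2 huγ1).trans h2r_ge
      · exact (tsub_le_tsub huγ2 huα1).trans h2r_ge
    calc β ≤ F u v := hβle
      _ ≤ F uα vα + F uγ vγ := keyMTT F hF hFc ht1 ht2 ht3 hs1 hs2 hs3
      _ = α + γ := by rw [hα', hγ']
  · -- γ ≤ α + β
    set u := min (uα + uβ) s₁ with hu
    set v := min (vα + vβ) t₁ with hv
    obtain ⟨ht1, ht2, ht3⟩ := tripletMinMTT huα2 (huβ2.trans h2r_le)
    obtain ⟨hs1, hs2, hs3⟩ := tripletMinMTT (hvα2.trans h2ρ_le) hvβ2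
    have hγle : γ ≤ F u v :=
      boundγ u v (le_min (huα1.trans le_self_add) hss) (min_le_right _ _)
        (le_min (hvβ1.trans le_add_self) htt) (min_le_right _ _)
    calc γ ≤ F u v := hγle
      _ ≤ F uα vα + F uβ vβ := keyMTT F hF hFc ht1 ht2 ht3 hs1 hs2 hs3
      _ = α + β := by rw [hα', hβ']
end AuxMTT
end

section
/- Let X, Y, Z, and W be four mm-spaces and let F : [0,∞)² → [0,∞) be a continuous metric preserving function. Then □(X ×_F Z, Y ×_F W) ≤ max { □(X, Y) + □(Z, W), 2 F(□(X, Y)/2, □(Z, W)/2) }. -/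
open MeasureTheory Filter Topology NNReal ENNReal TopologicalSpace

section Aux

open MeasureTheory Set Filter Topology NNReal ProbabilityTheory

lemma exists_param_real (ν : Measure ℝ) [IsProbabilityMeasure ν] :
    ∃ g : ℝ → ℝ, Measurable g ∧ (volume.restrict (Set.Ico (0:ℝ) 1)).map g = ν := by
  set Fc : ℝ → ℝ := fun x => cdf ν x with hFc
  set S : ℝ → Set ℝ := fun t => {y | t ≤ Fc y} with hS
  set g : ℝ → ℝ := fun t => sInf (S t) with hg
  have hmono : Monotone Fc := monotone_cdf ν
  have h0 : ∀ x, 0 ≤ Fc x := fun x => cdf_nonneg ν x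
  have h1 : ∀ x, Fc x ≤ 1 := fun x => cdf_le_one ν x
  have hne : ∀ t : ℝ, t < 1 → (S t).Nonempty := by
    intro t ht
    obtain ⟨y, hy⟩ := ((tendsto_cdf_atTop ν).eventually (eventually_ge_nhds ht)).exists
    exact ⟨y, hy⟩
  have hbdd : ∀ t : ℝ, 0 < t → BddBelow (S t) := by
    intro t ht
    obtain ⟨y₀, hy₀⟩ := eventually_atBot.mp
      ((tendsto_cdf_atBot ν).eventually (eventually_lt_nhds ht))
    refine ⟨y₀, fun y hy => ?_⟩
    by_contra hlt
    push_neg at hlt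
    exact absurd hy (not_le.mpr (hy₀ y hlt.le))
  have hmem : ∀ t : ℝ, 0 < t → t < 1 → t ≤ Fc (g t) := by
    intro t ht0 ht1
    have hsub : Ioi (g t) ⊆ S t := by
      intro y hy
      obtain ⟨s, hsS, hsy⟩ := exists_lt_of_csInf_lt (hne t ht1) hy
      exact le_trans hsS (hmono hsy.le)
    have hrc : Tendsto Fc (nhdsWithin (g t) (Ioi (g t))) (nhds (Fc (g t))) :=
      ((cdf ν).right_continuous (g t)).tendsto.mono_left
        (nhdsWithin_mono _ Ioi_subset_Ici_self)
    exact ge_of_tendsto hrc (eventually_nhdsWithin_of_forall (fun y hy => hsub hy))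
  have hiff : ∀ t : ℝ, 0 < t → t < 1 → ∀ x : ℝ, (g t ≤ x ↔ t ≤ Fc x) := by
    intro t ht0 ht1 x
    exact ⟨fun h => le_trans (hmem t ht0 ht1) (hmono h), fun h => csInf_le (hbdd t ht0) h⟩
  have hglow : ∀ t : ℝ, t ≤ 0 → g t = 0 := by
    intro t ht
    have huniv : S t = univ := eq_univ_of_forall fun y => le_trans ht (h0 y)
    rw [hg]; simp only [huniv]
    exact Real.sInf_of_not_bddBelow (by simp [not_bddBelow_univ (α := ℝ)])
  have hghigh : ∀ t : ℝ, 1 < t → g t = 0 := by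
    intro t ht
    have hempty : S t = ∅ :=
      eq_empty_of_forall_notMem fun y hy => absurd hy (not_le.mpr ((h1 y).trans_lt ht))
    rw [hg]; simp only [hempty, Real.sInf_empty]
  have hmeas : Measurable g := by
    apply measurable_of_Iic
    intro x
    have hset : g ⁻¹' Iic x =
        (Ioo (0:ℝ) 1 ∩ Iic (Fc x)) ∪ (if (0:ℝ) ≤ x then Iic 0 ∪ Ioi 1 else ∅) ∪
          (if g 1 ≤ x then {1} else ∅) := by
      ext t
      simp only [mem_preimage, mem_Iic, mem_union, mem_inter_iff, mem_Ioo]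
      constructor
      · intro ht
        rcases le_or_gt t 0 with h|h
        · left; right; rw [if_pos ((hglow t h) ▸ ht)]; exact Or.inl h
        rcases lt_trichotomy t 1 with h'|h'|h'
        · exact Or.inl (Or.inl ⟨⟨h, h'⟩, (hiff t h h' x).mp ht⟩)
        · right; rw [if_pos (h' ▸ ht)]; exact h'.symm ▸ rfl
        · left; right; rw [if_pos ((hghigh t h') ▸ ht)]; exact Or.inr h'
      · intro ht
        rcases ht with (⟨⟨ha, hb⟩, hc⟩ | h') | h''
        · exact (hiff t ha hb x).mpr hc
        · split_ifs at h' with hx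
          · rcases h' with h'|h'
            · rw [hglow t h']; exact hx
            · rw [hghigh t h']; exact hx
          · exact absurd h' (notMem_empty t)
        · split_ifs at h'' with hx
          · rw [mem_singleton_iff] at h''; rw [h'']; exact hx
          · exact absurd h'' (notMem_empty t)
    rw [hset]
    refine (((measurableSet_Ioo.inter measurableSet_Iic).union ?_).union ?_) <;> split_ifs <;>
      simp [MeasurableSet.union, measurableSet_Iic, measurableSet_Ioi]
  refine ⟨g, hmeas, ?_⟩
  haveI : IsProbabilityMeasure (volume.restrict (Set.Ico (0:ℝ) 1)) := ⟨by simp [Real.volume_Ico]⟩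
  haveI : IsProbabilityMeasure ((volume.restrict (Set.Ico (0:ℝ) 1)).map g) :=
    Measure.isProbabilityMeasure_map hmeas.aemeasurable
  apply Measure.ext_of_Iic
  intro x
  rw [Measure.map_apply hmeas measurableSet_Iic,
    Measure.restrict_apply (hmeas measurableSet_Iic)]
  have hIoo : g ⁻¹' Iic x ∩ Ioo 0 1 = Iic (Fc x) ∩ Ioo 0 1 := by
    ext t
    simp only [mem_inter_iff, mem_preimage, mem_Iic, mem_Ioo, and_congr_left_iff]
    intro ht
    exact hiff t ht.1 ht.2 x
  have hvol : volume (g ⁻¹' Iic x ∩ Ico 0 1) = volume (g ⁻¹' Iic x ∩ Ioo 0 1) := by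
    apply le_antisymm
    · calc volume (g ⁻¹' Iic x ∩ Ico 0 1)
          ≤ volume ((g ⁻¹' Iic x ∩ Ioo 0 1) ∪ {0}) := by
            apply measure_mono
            intro t ⟨ht1, ht2, ht3⟩
            rcases eq_or_lt_of_le ht2 with h|h
            · exact Or.inr (by simp [← h])
            · exact Or.inl ⟨ht1, h, ht3⟩
        _ ≤ volume (g ⁻¹' Iic x ∩ Ioo 0 1) + volume ({0} : Set ℝ) := measure_union_le _ _
        _ = volume (g ⁻¹' Iic x ∩ Ioo 0 1) := by simp
    · exact measure_mono (inter_subset_inter_right _ Ioo_subset_Ico_self)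
  rw [hvol, hIoo, ← ofReal_cdf ν x]
  rcases lt_or_ge (Fc x) 1 with h|h
  · have heq : Iic (Fc x) ∩ Ioo 0 1 = Ioc 0 (Fc x) := by
      ext t
      simp only [mem_inter_iff, mem_Iic, mem_Ioo, mem_Ioc]
      exact ⟨fun ⟨a, b, _⟩ => ⟨b, a⟩, fun ⟨a, b⟩ => ⟨b, a, b.trans_lt h⟩⟩
    rw [heq, Real.volume_Ioc, sub_zero]
  · have hx1 : Fc x = 1 := le_antisymm (h1 x) h
    have heq : Iic (Fc x) ∩ Ioo 0 1 = Ioo 0 1 := by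
      rw [inter_eq_self_of_subset_right]
      intro t ⟨_, ht⟩
      exact (mem_Iic.mpr (ht.le.trans hx1.symm.le))
    rw [heq, Real.volume_Ioo, sub_zero]
    exact congrArg ENNReal.ofReal hx1.symm

lemma exists_param (α : Type*) [MeasurableSpace α] [StandardBorelSpace α] [Nonempty α]
    (μ : Measure α) [IsProbabilityMeasure μ] :
    ∃ φ : ℝ → α, Measurable φ ∧ (volume.restrict (Set.Ico (0:ℝ) 1)).map φ = μ := by
  obtain ⟨f, hf⟩ := MeasureTheory.exists_measurableEmbedding_real α
  haveI : IsProbabilityMeasure (μ.map f) := Measure.isProbabilityMeasure_map hf.measurable.aemeasurable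
  obtain ⟨g, hg, hgmap⟩ := exists_param_real (μ.map f)
  obtain ⟨h, hh, hhf⟩ := hf.exists_measurable_extend measurable_id (fun _ => ‹Nonempty α›)
  refine ⟨h ∘ g, hh.comp hg, ?_⟩
  rw [← Measure.map_map hh hg, hgmap, Measure.map_map hh hf.measurable, hhf, Measure.map_id]

lemma F_triangle {F : ℝ≥0 → ℝ≥0 → ℝ≥0} (hF : IsMetricPreserving2 F) (a b c d : ℝ≥0) :
    F a b ≤ F c d + F (nndist a c) (nndist b d) := by
  obtain ⟨-, -, htri⟩ := hF ℝ≥0 ℝ≥0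
  have := htri (0, 0) (c, d) (a, b)
  simpa [NNReal.nndist_zero_eq_val, nndist_comm] using this

lemma exists_complex_points (u e : ℝ≥0) (h : u ≤ 2 * e) :
    ∃ w z : ℂ, nndist (0:ℂ) z = u ∧ nndist (0:ℂ) w = e ∧ nndist w z = e := by
  have hue : (u:ℝ)/2 ≤ (e:ℝ) := by
    have := NNReal.coe_le_coe.mpr h
    push_cast at this
    linarith
  have hnn : 0 ≤ (e:ℝ)^2 - ((u:ℝ)/2)^2 := by nlinarith [u.coe_nonneg, e.coe_nonneg]
  set hh : ℝ := Real.sqrt ((e:ℝ)^2 - ((u:ℝ)/2)^2) with hhdef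
  have hh2 : hh^2 = (e:ℝ)^2 - ((u:ℝ)/2)^2 := Real.sq_sqrt hnn
  refine ⟨((u:ℝ)/2 : ℝ) + hh * Complex.I, ((u:ℝ) : ℂ), ?_, ?_, ?_⟩
  · ext
    rw [coe_nndist, dist_eq_norm, zero_sub, norm_neg, Complex.norm_real]
    simp [abs_of_nonneg u.coe_nonneg]
  · ext
    rw [coe_nndist, dist_eq_norm, zero_sub, norm_neg]
    rw [Complex.norm_add_mul_I]
    rw [hh2]
    rw [show ((u:ℝ)/2)^2 + ((e:ℝ)^2 - ((u:ℝ)/2)^2) = (e:ℝ)^2 by ring]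
    exact Real.sqrt_sq e.coe_nonneg
  · ext
    rw [coe_nndist, dist_eq_norm]
    have heq : (↑((u:ℝ)/2) + ↑hh * Complex.I - ↑((u:ℝ)) : ℂ) = ↑(-((u:ℝ)/2)) + ↑hh * Complex.I := by
      push_cast; ring
    rw [heq, Complex.norm_add_mul_I, neg_pow, hh2]
    rw [show (-1:ℝ)^2 * ((u:ℝ)/2)^2 + ((e:ℝ)^2 - ((u:ℝ)/2)^2) = (e:ℝ)^2 by ring]
    exact Real.sqrt_sq e.coe_nonneg

lemma F_doubling {F : ℝ≥0 → ℝ≥0 → ℝ≥0} (hF : IsMetricPreserving2 F) (u v e f : ℝ≥0)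
    (hu : u ≤ 2 * e) (hv : v ≤ 2 * f) : F u v ≤ 2 * F e f := by
  obtain ⟨w₁, z₁, hz₁, hw₁, hwz₁⟩ := exists_complex_points u e hu
  obtain ⟨w₂, z₂, hz₂, hw₂, hwz₂⟩ := exists_complex_points v f hv
  obtain ⟨-, -, htri⟩ := hF ℂ ℂ
  have := htri (0, 0) (w₁, w₂) (z₁, z₂)
  simp only [hz₁, hz₂, hw₁, hw₂, hwz₁, hwz₂] at this
  calc F u v ≤ F e f + F e f := this
    _ = 2 * F e f := (two_mul _).symm

lemma F_abs_diff {F : ℝ≥0 → ℝ≥0 → ℝ≥0} (hF : IsMetricPreserving2 F) (a b c d : ℝ≥0)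
    {ε₁ ε₂ : ℝ} (h1 : 0 ≤ ε₁) (h2 : 0 ≤ ε₂)
    (hac : |(a:ℝ) - c| ≤ ε₁) (hbd : |(b:ℝ) - d| ≤ ε₂) :
    |(F a b : ℝ) - F c d| ≤ 2 * (F (ε₁/2).toNNReal (ε₂/2).toNNReal : ℝ) := by
  set e := (ε₁/2).toNNReal with he
  set f := (ε₂/2).toNNReal with hf
  have hce : (e : ℝ) = ε₁/2 := Real.coe_toNNReal _ (by linarith)
  have hcf : (f : ℝ) = ε₂/2 := Real.coe_toNNReal _ (by linarith)
  have hac' : nndist a c ≤ 2 * e := by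
    rw [← NNReal.coe_le_coe, coe_nndist, NNReal.dist_eq]
    push_cast
    rw [hce]; linarith
  have hbd' : nndist b d ≤ 2 * f := by
    rw [← NNReal.coe_le_coe, coe_nndist, NNReal.dist_eq]
    push_cast
    rw [hcf]; linarith
  have key1 : F a b ≤ F c d + 2 * F e f :=
    (F_triangle hF a b c d).trans (add_le_add_right (F_doubling hF _ _ _ _ hac' hbd') _)
  have key2 : F c d ≤ F a b + 2 * F e f := by
    refine (F_triangle hF c d a b).trans (add_le_add_right (F_doubling hF _ _ _ _ ?_ ?_) _)
    · rwa [nndist_comm]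
    · rwa [nndist_comm]
  rw [abs_sub_le_iff]
  constructor
  · have := NNReal.coe_le_coe.mpr key1; push_cast at this; linarith
  · have := NNReal.coe_le_coe.mpr key2; push_cast at this; linarith

/-- The defining set of `boxDistD`. -/
def boxSet {α β : Type*} [MeasurableSpace α] [MeasurableSpace β]
    (dα : α → α → ℝ) (dβ : β → β → ℝ) (μ : Measure α) (ν : Measure β) : Set ℝ :=
  {ε : ℝ | 0 ≤ ε ∧ ∃ (φ : ℝ → α) (ψ : ℝ → β), Measurable φ ∧ Measurable ψ ∧
    (volume.restrict (Set.Ico (0 : ℝ) 1)).map φ = μ ∧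
    (volume.restrict (Set.Ico (0 : ℝ) 1)).map ψ = ν ∧
    ∃ I₀ : Set ℝ, I₀ ⊆ Set.Ico (0 : ℝ) 1 ∧ MeasurableSet I₀ ∧
      ENNReal.ofReal (1 - ε) ≤ volume I₀ ∧
      ∀ s ∈ I₀, ∀ t ∈ I₀, |dα (φ s) (φ t) - dβ (ψ s) (ψ t)| ≤ ε}

lemma boxDistD_eq_sInf_boxSet {α β : Type*} [MeasurableSpace α] [MeasurableSpace β]
    (dα : α → α → ℝ) (dβ : β → β → ℝ) (μ : Measure α) (ν : Measure β) :
    boxDistD dα dβ μ ν = sInf (boxSet dα dβ μ ν) := rfl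

lemma bddBelow_boxSet {α β : Type*} [MeasurableSpace α] [MeasurableSpace β]
    (dα : α → α → ℝ) (dβ : β → β → ℝ) (μ : Measure α) (ν : Measure β) :
    BddBelow (boxSet dα dβ μ ν) := ⟨0, fun _ hx => hx.1⟩

lemma one_mem_boxSet {α β : Type*} [MeasurableSpace α] [MeasurableSpace β]
    [StandardBorelSpace α] [StandardBorelSpace β] [Nonempty α] [Nonempty β]
    (dα : α → α → ℝ) (dβ : β → β → ℝ) (μ : Measure α) (ν : Measure β)
    [IsProbabilityMeasure μ] [IsProbabilityMeasure ν] :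
    (1:ℝ) ∈ boxSet dα dβ μ ν := by
  obtain ⟨φ, hφ, hφm⟩ := exists_param α μ
  obtain ⟨ψ, hψ, hψm⟩ := exists_param β ν
  exact ⟨zero_le_one, φ, ψ, hφ, hψ, hφm, hψm, ∅, empty_subset _, MeasurableSet.empty,
    by simp, fun s hs => absurd hs (notMem_empty s)⟩

lemma mem_boxSet_prod {X Y Z W : Type} [MetricSpace X] [MeasurableSpace X]
    [MetricSpace Y] [MeasurableSpace Y] [MetricSpace Z] [MeasurableSpace Z]
    [MetricSpace W] [MeasurableSpace W]
    (μX : Measure X) (μY : Measure Y) (μZ : Measure Z) (μW : Measure W)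
    {F : ℝ≥0 → ℝ≥0 → ℝ≥0} (hF : IsMetricPreserving2 F) {ε₁ ε₂ : ℝ}
    (h₁ : ε₁ ∈ boxSet dist dist μX μY) (h₂ : ε₂ ∈ boxSet dist dist μZ μW) :
    max (ε₁ + ε₂) (2 * (F (ε₁/2).toNNReal (ε₂/2).toNNReal : ℝ)) ∈
      boxSet (fun p q : X × Z => (F (nndist p.1 q.1) (nndist p.2 q.2) : ℝ))
        (fun p q : Y × W => (F (nndist p.1 q.1) (nndist p.2 q.2) : ℝ))
        (μX.prod μZ) (μY.prod μW) := by
  obtain ⟨he₁, φX, ψY, hφX, hψY, hmX, hmY, I₁, hI₁sub, hI₁meas, hI₁vol, hI₁d⟩ := h₁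
  obtain ⟨he₂, φZ, ψW, hφZ, hψW, hmZ, hmW, I₂, hI₂sub, hI₂meas, hI₂vol, hI₂d⟩ := h₂
  set L : Measure ℝ := volume.restrict (Set.Ico (0:ℝ) 1) with hL
  haveI : IsProbabilityMeasure L := ⟨by simp [hL, Real.volume_Ico]⟩
  haveI : IsProbabilityMeasure (L.prod L) := inferInstance
  obtain ⟨ρ, hρ, hρmap⟩ := exists_param (ℝ × ℝ) (L.prod L)
  set ε := max (ε₁ + ε₂) (2 * (F (ε₁/2).toNNReal (ε₂/2).toNNReal : ℝ)) with hε
  have hε0 : 0 ≤ ε := le_max_of_le_left (by linarith)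
  refine ⟨hε0, fun r => (φX (ρ r).1, φZ (ρ r).2), fun r => (ψY (ρ r).1, ψW (ρ r).2),
    ((hφX.comp (measurable_fst.comp hρ)).prodMk (hφZ.comp (measurable_snd.comp hρ))),
    ((hψY.comp (measurable_fst.comp hρ)).prodMk (hψW.comp (measurable_snd.comp hρ))), ?_, ?_,
    ρ ⁻¹' (I₁ ×ˢ I₂) ∩ Set.Ico 0 1, inter_subset_right, ?_, ?_, ?_⟩
  · show L.map ((Prod.map φX φZ) ∘ ρ) = μX.prod μZ
    rw [← Measure.map_map (hφX.prodMap hφZ) hρ, hρmap,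
      ← Measure.map_prod_map _ _ hφX hφZ, hmX, hmZ]
  · show L.map ((Prod.map ψY ψW) ∘ ρ) = μY.prod μW
    rw [← Measure.map_map (hψY.prodMap hψW) hρ, hρmap,
      ← Measure.map_prod_map _ _ hψY hψW, hmY, hmW]
  · exact ((hρ (hI₁meas.prod hI₂meas)).inter measurableSet_Ico)
  · have hcalc : volume (ρ ⁻¹' (I₁ ×ˢ I₂) ∩ Set.Ico 0 1) = L I₁ * L I₂ := by
      rw [← Measure.restrict_apply (hρ (hI₁meas.prod hI₂meas)),
        ← Measure.map_apply hρ (hI₁meas.prod hI₂meas), hρmap, Measure.prod_prod]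
    have hLI₁ : ENNReal.ofReal (1 - ε₁) ≤ L I₁ := by
      rwa [hL, Measure.restrict_apply' measurableSet_Ico,
        inter_eq_self_of_subset_left hI₁sub]
    have hLI₂ : ENNReal.ofReal (1 - ε₂) ≤ L I₂ := by
      rwa [hL, Measure.restrict_apply' measurableSet_Ico,
        inter_eq_self_of_subset_left hI₂sub]
    rw [hcalc]
    calc ENNReal.ofReal (1 - ε) ≤ ENNReal.ofReal (1 - (ε₁ + ε₂)) :=
          ENNReal.ofReal_le_ofReal (by
            have h := le_max_left (ε₁ + ε₂) (2 * (F (ε₁/2).toNNReal (ε₂/2).toNNReal : ℝ))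
            simp only [hε]; linarith)
      _ ≤ ENNReal.ofReal (1 - ε₁) * ENNReal.ofReal (1 - ε₂) := by
          rcases le_or_gt (1 - (ε₁ + ε₂)) 0 with h|h
          · simp [ENNReal.ofReal_of_nonpos h, ENNReal.ofReal_eq_zero.mpr h]
          · rw [← ENNReal.ofReal_mul (by linarith)]
            exact ENNReal.ofReal_le_ofReal (by nlinarith)
      _ ≤ L I₁ * L I₂ := mul_le_mul' hLI₁ hLI₂
  · rintro s ⟨hs, -⟩ t ⟨ht, -⟩
    rw [mem_preimage, mem_prod] at hs ht
    simp only []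
    have hXbound := hI₁d _ hs.1 _ ht.1
    have hZbound := hI₂d _ hs.2 _ ht.2
    rw [dist_nndist, dist_nndist] at hXbound
    rw [dist_nndist, dist_nndist] at hZbound
    refine le_trans (F_abs_diff hF _ _ _ _ he₁ he₂ ?_ ?_) (le_max_right _ _)
    · exact_mod_cast hXbound
    · exact_mod_cast hZbound

end Aux

/-- For mm-spaces `X, Y, Z, W` and a continuous metric preserving `F` on
`[0,∞)²`, `□(X ×_F Z, Y ×_F W) ≤ max {□(X,Y) + □(Z,W), 2 F(□(X,Y)/2, □(Z,W)/2)}`. -/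
theorem boxDist_F_prod_le (X Y Z W : Type)
    [MetricSpace X] [MeasurableSpace X] [BorelSpace X] [SeparableSpace X] [CompleteSpace X]
    [MetricSpace Y] [MeasurableSpace Y] [BorelSpace Y] [SeparableSpace Y] [CompleteSpace Y]
    [MetricSpace Z] [MeasurableSpace Z] [BorelSpace Z] [SeparableSpace Z] [CompleteSpace Z]
    [MetricSpace W] [MeasurableSpace W] [BorelSpace W] [SeparableSpace W] [CompleteSpace W]
    (μX : Measure X) [IsProbabilityMeasure μX] (μY : Measure Y) [IsProbabilityMeasure μY]
    (μZ : Measure Z) [IsProbabilityMeasure μZ] (μW : Measure W) [IsProbabilityMeasure μW]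
    (F : ℝ≥0 → ℝ≥0 → ℝ≥0) (hF : IsMetricPreserving2 F)
    (hFc : Continuous fun p : ℝ≥0 × ℝ≥0 => F p.1 p.2) :
    boxDistD (fun p q : X × Z => (F (nndist p.1 q.1) (nndist p.2 q.2) : ℝ))
        (fun p q : Y × W => (F (nndist p.1 q.1) (nndist p.2 q.2) : ℝ))
        (μX.prod μZ) (μY.prod μW) ≤
      max (boxDistD dist dist μX μY + boxDistD dist dist μZ μW)
        (2 * (F (boxDistD dist dist μX μY / 2).toNNReal
                (boxDistD dist dist μZ μW / 2).toNNReal : ℝ)) := by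
  classical
  haveI : Nonempty X := μX.nonempty_of_neZero
  haveI : Nonempty Y := μY.nonempty_of_neZero
  haveI : Nonempty Z := μZ.nonempty_of_neZero
  haveI : Nonempty W := μW.nonempty_of_neZero
  have hne₁ : (boxSet dist dist μX μY).Nonempty := ⟨1, one_mem_boxSet _ _ _ _⟩
  have hne₂ : (boxSet dist dist μZ μW).Nonempty := ⟨1, one_mem_boxSet _ _ _ _⟩
  obtain ⟨u, -, hu_t, hu_mem⟩ := exists_seq_tendsto_sInf hne₁ (bddBelow_boxSet _ _ _ _)
  obtain ⟨v, -, hv_t, hv_mem⟩ := exists_seq_tendsto_sInf hne₂ (bddBelow_boxSet _ _ _ _)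
  simp only [boxDistD_eq_sInf_boxSet]
  set a := sInf (boxSet dist dist μX μY) with ha
  set b := sInf (boxSet dist dist μZ μW) with hb
  have hstep : ∀ n, sInf (boxSet
      (fun p q : X × Z => (F (nndist p.1 q.1) (nndist p.2 q.2) : ℝ))
      (fun p q : Y × W => (F (nndist p.1 q.1) (nndist p.2 q.2) : ℝ))
      (μX.prod μZ) (μY.prod μW)) ≤
      max (u n + v n) (2 * (F (u n/2).toNNReal (v n/2).toNNReal : ℝ)) := fun n =>
    csInf_le (bddBelow_boxSet _ _ _ _)
      (mem_boxSet_prod μX μY μZ μW hF (hu_mem n) (hv_mem n))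
  have htF : Tendsto (fun n => (F (u n/2).toNNReal (v n/2).toNNReal : ℝ)) atTop
      (𝓝 (F (a/2).toNNReal (b/2).toNNReal : ℝ)) := by
    have hta : Tendsto (fun n => ((u n/2).toNNReal, (v n/2).toNNReal)) atTop
        (𝓝 ((a/2).toNNReal, (b/2).toNNReal)) :=
      (((continuous_real_toNNReal.tendsto _).comp (hu_t.div_const 2)).prodMk_nhds
        ((continuous_real_toNNReal.tendsto _).comp (hv_t.div_const 2)))
    exact (NNReal.continuous_coe.tendsto _).comp ((hFc.tendsto _).comp hta)
  have hfull : Tendsto (fun n => max (u n + v n)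
      (2 * (F (u n/2).toNNReal (v n/2).toNNReal : ℝ))) atTop
      (𝓝 (max (a + b) (2 * (F (a/2).toNNReal (b/2).toNNReal : ℝ)))) :=
    (hu_t.add hv_t).max (htF.const_mul 2)
  exact ge_of_tendsto hfull (Filter.Eventually.of_forall hstep)
end

section
/- Let {X_n} and {Y_n} be two sequences of mm-spaces such that □(X_n, X) → 0 and □(Y_n, Y) → 0 as n → ∞ for mm-spaces X and Y. Let F_n, n = 1, 2, …, and F be continuous metric preserving functions on [0,∞)² such that F_n converges pointwise to F as n → ∞. Then □(X_n ×_{F_n} Y_n, X ×_F Y) → 0 as n → ∞. -/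
open MeasureTheory Filter Topology NNReal ENNReal TopologicalSpace

noncomputable section

namespace BoxAux
open Set

set_option linter.unusedSectionVars false

/-- The Lebesgue measure restricted to `[0,1)`. -/
def leb01 : Measure ℝ := volume.restrict (Set.Ico (0 : ℝ) 1)

instance : IsProbabilityMeasure leb01 := by
  constructor
  rw [leb01, Measure.restrict_apply_univ, Real.volume_Ico]
  norm_num

/-- Quantile function of a measure on ℝ. -/
def qf (ρ : Measure ℝ) (u : ℝ) : ℝ := sInf {x | u ≤ ProbabilityTheory.cdf ρ x}

variable {ρ : Measure ℝ} [IsProbabilityMeasure ρ]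

lemma qf_S_nonempty {u : ℝ} (hu : u < 1) : {x | u ≤ ProbabilityTheory.cdf ρ x}.Nonempty := by
  have h := (ProbabilityTheory.tendsto_cdf_atTop ρ).eventually (eventually_ge_nhds hu)
  exact h.exists

lemma qf_S_bddBelow {u : ℝ} (hu : 0 < u) : BddBelow {x | u ≤ ProbabilityTheory.cdf ρ x} := by
  have h := (ProbabilityTheory.tendsto_cdf_atBot ρ).eventually (eventually_lt_nhds hu)
  obtain ⟨x₀, hx₀⟩ := eventually_atBot.1 h
  refine ⟨x₀, fun y hy => ?_⟩
  by_contra hxy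
  exact absurd hy (not_le.2 (hx₀ y (le_of_lt (not_le.1 hxy))))

lemma le_cdf_qf {u : ℝ} (hu0 : 0 < u) (hu1 : u < 1) :
    u ≤ ProbabilityTheory.cdf ρ (qf ρ u) := by
  set G := ProbabilityTheory.cdf ρ
  have hne := qf_S_nonempty (ρ := ρ) hu1
  have hbd := qf_S_bddBelow (ρ := ρ) hu0
  have hright : Tendsto G (𝓝[>] (qf ρ u)) (𝓝 (G (qf ρ u))) :=
    (G.right_continuous (qf ρ u)).tendsto.mono_left (nhdsWithin_mono _ Ioi_subset_Ici_self)
  refine ge_of_tendsto hright ?_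
  filter_upwards [self_mem_nhdsWithin] with x hx
  obtain ⟨y, hy, hyx⟩ := exists_lt_of_csInf_lt hne hx
  exact le_trans hy (G.mono hyx.le)

lemma qf_le_iff {u x : ℝ} (hu0 : 0 < u) (hu1 : u < 1) :
    qf ρ u ≤ x ↔ u ≤ ProbabilityTheory.cdf ρ x := by
  constructor
  · intro h
    exact le_trans (le_cdf_qf hu0 hu1) ((ProbabilityTheory.cdf ρ).mono h)
  · intro h
    exact csInf_le (qf_S_bddBelow hu0) h

/-- The inverse-transform-sampling parameter for a measure on ℝ. -/
def param0 (ρ : Measure ℝ) : ℝ → ℝ := fun u =>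
  if u ∈ Set.Ioo (0 : ℝ) 1 then qf ρ u else qf ρ (1 / 2)

lemma param0_preimage_Iic (x : ℝ) :
    param0 ρ ⁻¹' Iic x =
      (Ioo (0:ℝ) 1 ∩ Iic (ProbabilityTheory.cdf ρ x)) ∪
        (if qf ρ (1/2) ≤ x then (Ioo (0:ℝ) 1)ᶜ else ∅) := by
  ext u
  simp only [mem_preimage, mem_Iic, mem_union, mem_inter_iff, mem_compl_iff, param0]
  by_cases hu : u ∈ Ioo (0:ℝ) 1
  · rw [if_pos hu, qf_le_iff hu.1 hu.2]
    split_ifs with hq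
    · simp [hu]
    · simp [hu]
  · rw [if_neg hu]
    split_ifs with hq
    · rw [one_div] at hq
      simp [hu, hq]
    · rw [one_div] at hq
      simp [hu, hq]

lemma measurable_param0 : Measurable (param0 ρ) := by
  apply measurable_of_Iic
  intro x
  rw [param0_preimage_Iic]
  refine MeasurableSet.union (measurableSet_Ioo.inter measurableSet_Iic) ?_
  split_ifs
  · exact measurableSet_Ioo.compl
  · exact MeasurableSet.empty

lemma map_param0 : leb01.map (param0 ρ) = ρ := by
  have hm : Measurable (param0 ρ) := measurable_param0
  have : IsProbabilityMeasure (leb01.map (param0 ρ)) :=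
    Measure.isProbabilityMeasure_map hm.aemeasurable
  refine Measure.ext_of_Iic _ _ (fun x => ?_)
  rw [Measure.map_apply hm measurableSet_Iic, leb01,
    Measure.restrict_apply (hm measurableSet_Iic)]
  have hIcoIoo : volume (param0 ρ ⁻¹' Iic x ∩ Ico (0:ℝ) 1) =
      volume (param0 ρ ⁻¹' Iic x ∩ Ioo (0:ℝ) 1) := by
    apply measure_congr
    have h1 : (Ico (0:ℝ) 1 : Set ℝ) =ᵐ[volume] (Ioo (0:ℝ) 1 : Set ℝ) := Ioo_ae_eq_Ico.symm
    exact Filter.EventuallyEq.inter (ae_eq_refl _) h1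
  rw [hIcoIoo]
  have hG0 : 0 ≤ ProbabilityTheory.cdf ρ x := ProbabilityTheory.cdf_nonneg ρ x
  have hG1 : ProbabilityTheory.cdf ρ x ≤ 1 := ProbabilityTheory.cdf_le_one ρ x
  have hset : param0 ρ ⁻¹' Iic x ∩ Ioo (0:ℝ) 1 =
      Ioo (0:ℝ) 1 ∩ Iic (ProbabilityTheory.cdf ρ x) := by
    rw [param0_preimage_Iic]
    ext u
    simp only [mem_inter_iff, mem_union, mem_compl_iff]
    split_ifs with hq
    · simp only [mem_compl_iff]
      tauto
    · simp only [mem_empty_iff_false, or_false]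
      tauto
  rw [hset, ← ProbabilityTheory.ofReal_cdf ρ x]
  rcases lt_or_eq_of_le hG1 with h1 | h1
  · have : Ioo (0:ℝ) 1 ∩ Iic (ProbabilityTheory.cdf ρ x) = Ioc (0:ℝ) (ProbabilityTheory.cdf ρ x) := by
      ext u
      simp only [mem_inter_iff, mem_Ioo, mem_Iic, mem_Ioc]
      constructor
      · rintro ⟨⟨h0, _⟩, h2⟩; exact ⟨h0, h2⟩
      · rintro ⟨h0, h2⟩; exact ⟨⟨h0, lt_of_le_of_lt h2 h1⟩, h2⟩
    rw [this, Real.volume_Ioc, sub_zero]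
  · have : Ioo (0:ℝ) 1 ∩ Iic (ProbabilityTheory.cdf ρ x) = Ioo (0:ℝ) 1 := by
      rw [inter_eq_left]
      intro u hu
      simp only [mem_Iic]
      rw [h1]; exact hu.2.le
    rw [this, Real.volume_Ioo, h1]
    norm_num

/-- Every Borel probability measure on a standard Borel space admits a parameter
from `[0,1)`. -/
theorem exists_param {α : Type*} [MeasurableSpace α] [StandardBorelSpace α]
    (μ : Measure α) [IsProbabilityMeasure μ] :
    ∃ φ : ℝ → α, Measurable φ ∧ leb01.map φ = μ := by
  have hne : Nonempty α := by
    by_contra h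
    rw [not_nonempty_iff] at h
    have : μ Set.univ = 1 := measure_univ
    rw [Set.univ_eq_empty_iff.2 h] at this
    simp at this
  obtain ⟨f, hf⟩ := MeasureTheory.exists_measurableEmbedding_real α
  obtain ⟨g, hg, hgf⟩ := hf.exists_measurable_extend measurable_id (fun _ => hne)
  set ρ : Measure ℝ := μ.map f with hρ
  have : IsProbabilityMeasure ρ := Measure.isProbabilityMeasure_map hf.measurable.aemeasurable
  refine ⟨g ∘ param0 ρ, hg.comp measurable_param0, ?_⟩
  rw [← Measure.map_map hg measurable_param0, map_param0, hρ,
    Measure.map_map hg hf.measurable, hgf, Measure.map_id]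

/-- A measure-preserving map from `([0,1), Leb)` to its square. -/
theorem exists_pairing :
    ∃ T : ℝ → ℝ × ℝ, Measurable T ∧ leb01.map T = leb01.prod leb01 := by
  have : IsProbabilityMeasure (leb01.prod leb01) := by infer_instance
  exact exists_param (leb01.prod leb01)

section MP

variable {F : ℝ≥0 → ℝ≥0 → ℝ≥0}

lemma nndist_zero_coe (x : ℝ≥0) : nndist (0:ℝ) (x:ℝ) = x := by
  apply NNReal.coe_injective
  rw [coe_nndist, Real.dist_eq]
  simp [abs_of_nonneg x.coe_nonneg]

lemma mp2_zero (hF : IsMetricPreserving2 F) : F 0 0 = 0 := by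
  have h := (hF ℝ ℝ).1 ((0:ℝ), (0:ℝ)) ((0:ℝ), (0:ℝ))
  simpa using h.2 rfl

/-- Perturbation inequality for metric preserving functions. -/
lemma mp2_perturb (hF : IsMetricPreserving2 F) (a a' b b' : ℝ≥0) :
    F a b ≤ F (nndist (a:ℝ) (a':ℝ)) (nndist (b:ℝ) (b':ℝ)) + F a' b' := by
  have h := (hF ℝ ℝ).2.2 ((0:ℝ), (0:ℝ)) (((a:ℝ) - a', (b:ℝ) - b')) (((a:ℝ), (b:ℝ)))
  have e1 : nndist (0:ℝ) ((a:ℝ)) = a := nndist_zero_coe a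
  have e2 : nndist (0:ℝ) ((b:ℝ)) = b := nndist_zero_coe b
  have e3 : nndist (0:ℝ) ((a:ℝ) - a') = nndist (a:ℝ) (a':ℝ) := by
    apply NNReal.coe_injective
    rw [coe_nndist, coe_nndist, Real.dist_eq, Real.dist_eq]
    rw [zero_sub, abs_neg]
  have e4 : nndist (0:ℝ) ((b:ℝ) - b') = nndist (b:ℝ) (b':ℝ) := by
    apply NNReal.coe_injective
    rw [coe_nndist, coe_nndist, Real.dist_eq, Real.dist_eq]
    rw [zero_sub, abs_neg]
  have e5 : nndist ((a:ℝ) - a') ((a:ℝ)) = a' := by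
    apply NNReal.coe_injective
    rw [coe_nndist, Real.dist_eq]
    simp [abs_of_nonneg a'.coe_nonneg]
  have e6 : nndist ((b:ℝ) - b') ((b:ℝ)) = b' := by
    apply NNReal.coe_injective
    rw [coe_nndist, Real.dist_eq]
    simp [abs_of_nonneg b'.coe_nonneg]
  simpa only [e1, e2, e3, e4, e5, e6] using h

/-- Doubling inequality for metric preserving functions. -/
lemma mp2_double (hF : IsMetricPreserving2 F) (a b δ γ : ℝ≥0)
    (ha : a ≤ 2 * δ) (hb : b ≤ 2 * γ) : F a b ≤ 2 * F δ γ := by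
  have h := (hF (ℝ × ℝ) (ℝ × ℝ)).2.2
    (((0:ℝ), (0:ℝ)), ((0:ℝ), (0:ℝ)))
    ((((a:ℝ)/2, (δ:ℝ)), ((b:ℝ)/2, (γ:ℝ))))
    ((((a:ℝ), (0:ℝ)), ((b:ℝ), (0:ℝ))))
  have ha2 : (a:ℝ)/2 ≤ (δ:ℝ) := by
    have := (NNReal.coe_le_coe.2 ha)
    push_cast at this
    linarith
  have hb2 : (b:ℝ)/2 ≤ (γ:ℝ) := by
    have := (NNReal.coe_le_coe.2 hb)
    push_cast at this
    linarith
  have key : ∀ (x δ' : ℝ≥0), (x:ℝ)/2 ≤ (δ':ℝ) →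
      nndist (((0:ℝ), (0:ℝ)) : ℝ × ℝ) (((x:ℝ)/2, (δ':ℝ))) = δ' ∧
      nndist ((((x:ℝ)/2, (δ':ℝ))) : ℝ × ℝ) (((x:ℝ), (0:ℝ))) = δ' ∧
      nndist (((0:ℝ), (0:ℝ)) : ℝ × ℝ) (((x:ℝ), (0:ℝ))) = x := by
    intro x δ' hx
    have h1 : (0:ℝ) ≤ (x:ℝ)/2 := by positivity
    refine ⟨?_, ?_, ?_⟩ <;>
      (apply NNReal.coe_injective;
       rw [coe_nndist, Prod.dist_eq];
       dsimp only;
       rw [Real.dist_eq, Real.dist_eq])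
    · rw [zero_sub, zero_sub, abs_neg, abs_neg, abs_of_nonneg h1,
        abs_of_nonneg δ'.coe_nonneg]
      exact max_eq_right hx
    · rw [show (x:ℝ)/2 - (x:ℝ) = -((x:ℝ)/2) by ring, abs_neg, abs_of_nonneg h1,
        show (δ':ℝ) - 0 = (δ':ℝ) by ring, abs_of_nonneg δ'.coe_nonneg]
      exact max_eq_right hx
    · rw [zero_sub, abs_neg, abs_of_nonneg x.coe_nonneg, sub_self, abs_zero]
      exact max_eq_left x.coe_nonneg
  obtain ⟨ea1, ea2, ea3⟩ := key a δ ha2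
  obtain ⟨eb1, eb2, eb3⟩ := key b γ hb2
  rw [two_mul]
  simpa only [ea1, ea2, ea3, eb1, eb2, eb3] using h

/-- Two-sided perturbation bound. -/
lemma mp2_abs_sub (hF : IsMetricPreserving2 F) (a a' b b' δ γ : ℝ≥0)
    (h1 : nndist (a:ℝ) (a':ℝ) ≤ 2 * δ) (h2 : nndist (b:ℝ) (b':ℝ) ≤ 2 * γ) :
    |(F a b : ℝ) - (F a' b' : ℝ)| ≤ 2 * (F δ γ : ℝ) := by
  have hc : F (nndist (a:ℝ) (a':ℝ)) (nndist (b:ℝ) (b':ℝ)) ≤ 2 * F δ γ :=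
    mp2_double hF _ _ _ _ h1 h2
  have hc' : F (nndist (a':ℝ) (a:ℝ)) (nndist (b':ℝ) (b:ℝ)) ≤ 2 * F δ γ := by
    rw [nndist_comm (a':ℝ), nndist_comm (b':ℝ)]
    exact hc
  have i1 : F a b ≤ 2 * F δ γ + F a' b' :=
    le_trans (mp2_perturb hF a a' b b') (add_le_add_left hc _)
  have i2 : F a' b' ≤ 2 * F δ γ + F a b :=
    le_trans (mp2_perturb hF a' a b' b) (add_le_add_left hc' _)
  rw [abs_sub_le_iff]
  constructor
  · have := NNReal.coe_le_coe.2 i1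
    push_cast at this ⊢
    linarith
  · have := NNReal.coe_le_coe.2 i2
    push_cast at this ⊢
    linarith

/-- Choice of a small positive δ with `F δ δ` small. -/
lemma exists_small (hFc : Continuous fun p : ℝ≥0 × ℝ≥0 => F p.1 p.2)
    (hF0 : F 0 0 = 0) {c : ℝ} (hc : 0 < c) :
    ∃ δ : ℝ≥0, 0 < δ ∧ (F δ δ : ℝ) < c := by
  have hg : Continuous fun t : ℝ≥0 => ((F t t : ℝ≥0) : ℝ) :=
    continuous_coe.comp (hFc.comp (continuous_id.prodMk continuous_id))
  have hmem : {t : ℝ≥0 | (F t t : ℝ) < c} ∈ 𝓝 (0 : ℝ≥0) := by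
    have : (fun t : ℝ≥0 => ((F t t : ℝ≥0) : ℝ)) ⁻¹' (Set.Iio c) ∈ 𝓝 (0 : ℝ≥0) := by
      apply hg.continuousAt.preimage_mem_nhds
      rw [hF0]
      simpa using Iio_mem_nhds hc
    exact this
  obtain ⟨ε, hε, hball⟩ := Metric.mem_nhds_iff.1 hmem
  refine ⟨(ε/2).toNNReal, ?_, ?_⟩
  · rw [← NNReal.coe_lt_coe]
    simp [Real.coe_toNNReal _ (by linarith : (0:ℝ) ≤ ε/2)]
    linarith
  · apply hball
    rw [Metric.mem_ball, NNReal.dist_eq]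
    simp [Real.coe_toNNReal _ (by linarith : (0:ℝ) ≤ ε/2)]
    rw [abs_of_nonneg (by linarith : (0:ℝ) ≤ ε/2)]
    linarith

variable {Fn : ℕ → ℝ≥0 → ℝ≥0 → ℝ≥0}

/-- Uniform convergence of `Fn` to `F` on compact boxes, in eventual form. -/
lemma unif (hFn : ∀ n, IsMetricPreserving2 (Fn n)) (hF : IsMetricPreserving2 F)
    (hFc : Continuous fun p : ℝ≥0 × ℝ≥0 => F p.1 p.2)
    (hpt : ∀ s t : ℝ≥0, Tendsto (fun n => Fn n s t) atTop (𝓝 (F s t)))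
    (R : ℝ) {ε : ℝ} (hε : 0 < ε) :
    ∀ᶠ n in atTop, ∀ a b : ℝ≥0, (a:ℝ) ≤ R → (b:ℝ) ≤ R →
      |(Fn n a b : ℝ) - (F a b : ℝ)| ≤ ε := by
  obtain ⟨δ, hδ0, hδ⟩ := exists_small hFc (mp2_zero hF) (by linarith : (0:ℝ) < ε/8)
  have hδ0' : (0:ℝ) < δ := hδ0
  set K : ℕ := ⌈R / (δ:ℝ)⌉₊ with hK
  have hptR : ∀ s t : ℝ≥0, ∀ᶠ n in atTop, |(Fn n s t : ℝ) - (F s t : ℝ)| < ε/8 := by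
    intro s t
    have h := NNReal.tendsto_coe.2 (hpt s t)
    have := h.eventually (Metric.ball_mem_nhds ((F s t : ℝ)) (by linarith : (0:ℝ) < ε/8))
    filter_upwards [this] with n hn
    rwa [Real.dist_eq] at hn
  have E1 := hptR δ δ
  have E2 : ∀ᶠ n in atTop, ∀ k ∈ Finset.range (K+1), ∀ l ∈ Finset.range (K+1),
      |(Fn n ((k:ℝ≥0) * δ) ((l:ℝ≥0) * δ) : ℝ) - (F ((k:ℝ≥0) * δ) ((l:ℝ≥0) * δ) : ℝ)| < ε/8 :=
    (eventually_all_finset _).2 fun k _ =>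
      (eventually_all_finset _).2 fun l _ => hptR _ _
  filter_upwards [E1, E2] with n hn1 hn2 a b ha hb
  -- grid approximation
  have main : ∀ x : ℝ≥0, (x:ℝ) ≤ R → ∃ k : ℕ, k ∈ Finset.range (K+1) ∧
      nndist (x:ℝ) (((k:ℝ≥0) * δ : ℝ≥0):ℝ) ≤ 2 * δ := by
    intro x hx
    set k : ℕ := ⌊(x:ℝ) / (δ:ℝ)⌋₊ with hk
    have hxδ : (0:ℝ) ≤ (x:ℝ) / δ := div_nonneg x.coe_nonneg (le_of_lt hδ0')
    have h1 : (k:ℝ) * δ ≤ x := by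
      have := Nat.floor_le hxδ
      rw [← hk] at this
      calc (k:ℝ) * δ ≤ ((x:ℝ)/δ) * δ := by
            apply mul_le_mul_of_nonneg_right this (le_of_lt hδ0')
        _ = x := by field_simp
    have h2 : (x:ℝ) < ((k:ℝ) + 1) * δ := by
      have := Nat.lt_floor_add_one ((x:ℝ)/δ)
      rw [← hk] at this
      calc (x:ℝ) = ((x:ℝ)/δ) * δ := by field_simp
        _ < ((k:ℝ) + 1) * δ := by
            apply mul_lt_mul_of_pos_right this hδ0'
    refine ⟨k, ?_, ?_⟩
    · rw [Finset.mem_range]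
      have hkK : k ≤ K := by
        have hxR : (x:ℝ)/δ ≤ R/δ := by gcongr
        exact le_trans (Nat.floor_le_floor hxR) (Nat.floor_le_ceil _)
      omega
    · rw [← NNReal.coe_le_coe, coe_nndist, Real.dist_eq]
      push_cast
      rw [abs_of_nonneg (by push_cast; linarith)]
      push_cast
      linarith
  obtain ⟨k, hkmem, hka⟩ := main a ha
  obtain ⟨l, hlmem, hlb⟩ := main b hb
  set a' : ℝ≥0 := (k:ℝ≥0) * δ
  set b' : ℝ≥0 := (l:ℝ≥0) * δ
  have t1 : |(Fn n a b : ℝ) - (Fn n a' b' : ℝ)| ≤ 2 * (Fn n δ δ : ℝ) :=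
    mp2_abs_sub (hFn n) a a' b b' δ δ hka hlb
  have t3 : |(F a' b' : ℝ) - (F a b : ℝ)| ≤ 2 * (F δ δ : ℝ) := by
    rw [abs_sub_comm]
    exact mp2_abs_sub hF a a' b b' δ δ hka hlb
  have t2 := hn2 k hkmem l hlmem
  have hFnδ : (Fn n δ δ : ℝ) < ε/4 := by
    have := hn1
    rw [abs_sub_lt_iff] at this
    linarith
  have u1 := abs_sub_le ((Fn n a b : ℝ)) ((Fn n a' b' : ℝ)) ((F a b : ℝ))
  have u2 := abs_sub_le ((Fn n a' b' : ℝ)) ((F a' b' : ℝ)) ((F a b : ℝ))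
  linarith

end MP

section Helpers

lemma exists_radius {γ : Type*} [MetricSpace γ] [MeasurableSpace γ]
    (m : Measure γ) [IsProbabilityMeasure m] (x₀ : γ) {c : ℝ} (hc : c < 1) :
    ∃ R : ℕ, ENNReal.ofReal c ≤ m (Metric.closedBall x₀ R) := by
  have hmono : Monotone (fun n : ℕ => Metric.closedBall x₀ (n : ℝ)) := by
    intro i j hij
    exact Metric.closedBall_subset_closedBall (by exact_mod_cast hij)
  have hunion : (⋃ n : ℕ, Metric.closedBall x₀ (n : ℝ)) = Set.univ := by
    ext z
    simp only [Set.mem_iUnion, Metric.mem_closedBall, Set.mem_univ, iff_true]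
    obtain ⟨n, hn⟩ := exists_nat_ge (dist z x₀)
    exact ⟨n, hn⟩
  have ht := tendsto_measure_iUnion_atTop (μ := m) hmono
  rw [hunion, measure_univ] at ht
  have hlt : ENNReal.ofReal c < 1 := by
    rcases le_or_gt c 0 with h | h
    · rw [ENNReal.ofReal_of_nonpos h]
      exact zero_lt_one
    · rw [← ENNReal.ofReal_one]
      exact (ENNReal.ofReal_lt_ofReal_iff one_pos).2 hc
  have := ht.eventually_const_lt hlt
  obtain ⟨R, hR⟩ := this.exists
  exact ⟨R, le_of_lt hR⟩

lemma inter_bound {I C : Set ℝ} (hC : MeasurableSet C)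
    {a b : ℝ} (ha0 : 0 ≤ a) (hb0 : 0 ≤ b) (hab : a + b ≤ 1)
    (hIvol : ENNReal.ofReal (1 - a) ≤ leb01 I) (hCvol : ENNReal.ofReal (1 - b) ≤ leb01 C) :
    ENNReal.ofReal (1 - a - b) ≤ leb01 (I ∩ C) := by
  have hun : leb01 (I ∪ C) ≤ 1 := prob_le_one
  have heq := measure_union_add_inter (μ := leb01) I hC
  have h1 : ENNReal.ofReal (1 - a) + ENNReal.ofReal (1 - b) ≤ 1 + leb01 (I ∩ C) :=
    calc ENNReal.ofReal (1 - a) + ENNReal.ofReal (1 - b) ≤ leb01 I + leb01 C :=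
          add_le_add hIvol hCvol
      _ = leb01 (I ∪ C) + leb01 (I ∩ C) := heq.symm
      _ ≤ 1 + leb01 (I ∩ C) := add_le_add_left hun _
  have h2 : (1 : ℝ≥0∞) + ENNReal.ofReal (1 - a - b) ≤
      ENNReal.ofReal (1 - a) + ENNReal.ofReal (1 - b) := by
    rw [← ENNReal.ofReal_one, ← ENNReal.ofReal_add (by norm_num) (by linarith),
      ← ENNReal.ofReal_add (by linarith) (by linarith)]
    exact ENNReal.ofReal_le_ofReal (by linarith)
  have h3 := le_trans h2 h1
  exact (ENNReal.add_le_add_iff_left ENNReal.one_ne_top).1 h3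

lemma exists_mem_box_lt {α β : Type*} [MeasurableSpace α] [MeasurableSpace β]
    [StandardBorelSpace α] [StandardBorelSpace β]
    (dα : α → α → ℝ) (dβ : β → β → ℝ) (μ : Measure α) (ν : Measure β)
    [IsProbabilityMeasure μ] [IsProbabilityMeasure ν] {η : ℝ}
    (h : boxDistD dα dβ μ ν < η) :
    ∃ ε : ℝ, ε < η ∧ 0 ≤ ε ∧ ∃ (φ : ℝ → α) (ψ : ℝ → β), Measurable φ ∧ Measurable ψ ∧
      (volume.restrict (Set.Ico (0 : ℝ) 1)).map φ = μ ∧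
      (volume.restrict (Set.Ico (0 : ℝ) 1)).map ψ = ν ∧
      ∃ I₀ : Set ℝ, I₀ ⊆ Set.Ico (0 : ℝ) 1 ∧ MeasurableSet I₀ ∧
        ENNReal.ofReal (1 - ε) ≤ volume I₀ ∧
        ∀ s ∈ I₀, ∀ t ∈ I₀, |dα (φ s) (φ t) - dβ (ψ s) (ψ t)| ≤ ε := by
  obtain ⟨φ, hφ, hφmap⟩ := exists_param μ
  obtain ⟨ψ, hψ, hψmap⟩ := exists_param ν
  have hne : {ε : ℝ | 0 ≤ ε ∧ ∃ (φ : ℝ → α) (ψ : ℝ → β), Measurable φ ∧ Measurable ψ ∧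
      (volume.restrict (Set.Ico (0 : ℝ) 1)).map φ = μ ∧
      (volume.restrict (Set.Ico (0 : ℝ) 1)).map ψ = ν ∧
      ∃ I₀ : Set ℝ, I₀ ⊆ Set.Ico (0 : ℝ) 1 ∧ MeasurableSet I₀ ∧
        ENNReal.ofReal (1 - ε) ≤ volume I₀ ∧
        ∀ s ∈ I₀, ∀ t ∈ I₀, |dα (φ s) (φ t) - dβ (ψ s) (ψ t)| ≤ ε}.Nonempty := by
    refine ⟨1, zero_le_one, φ, ψ, hφ, hψ, hφmap, hψmap, ∅, Set.empty_subset _,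
      MeasurableSet.empty, ?_, ?_⟩
    · simp
    · intro s hs
      exact absurd hs (Set.notMem_empty s)
  have hbdd : BddBelow {ε : ℝ | 0 ≤ ε ∧ ∃ (φ : ℝ → α) (ψ : ℝ → β),
      Measurable φ ∧ Measurable ψ ∧
      (volume.restrict (Set.Ico (0 : ℝ) 1)).map φ = μ ∧
      (volume.restrict (Set.Ico (0 : ℝ) 1)).map ψ = ν ∧
      ∃ I₀ : Set ℝ, I₀ ⊆ Set.Ico (0 : ℝ) 1 ∧ MeasurableSet I₀ ∧
        ENNReal.ofReal (1 - ε) ≤ volume I₀ ∧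
        ∀ s ∈ I₀, ∀ t ∈ I₀, |dα (φ s) (φ t) - dβ (ψ s) (ψ t)| ≤ ε} :=
    ⟨0, fun x hx => hx.1⟩
  unfold boxDistD at h
  obtain ⟨e, hmem, he⟩ := (csInf_lt_iff hbdd hne).1 h
  exact ⟨e, he, hmem⟩

end Helpers

end BoxAux

end

/-- If `□(Xₙ, X) → 0`, `□(Yₙ, Y) → 0`, and continuous metric preserving
functions `Fₙ` converge pointwise to a continuous metric preserving `F`, then
`□(Xₙ ×_{Fₙ} Yₙ, X ×_F Y) → 0`. -/
theorem boxDist_prod_tendsto (X : ℕ → Type)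
    [∀ n, MetricSpace (X n)] [∀ n, MeasurableSpace (X n)] [∀ n, BorelSpace (X n)]
    [∀ n, SeparableSpace (X n)] [∀ n, CompleteSpace (X n)]
    (Y : ℕ → Type)
    [∀ n, MetricSpace (Y n)] [∀ n, MeasurableSpace (Y n)] [∀ n, BorelSpace (Y n)]
    [∀ n, SeparableSpace (Y n)] [∀ n, CompleteSpace (Y n)]
    (X' Y' : Type)
    [MetricSpace X'] [MeasurableSpace X'] [BorelSpace X'] [SeparableSpace X'] [CompleteSpace X']
    [MetricSpace Y'] [MeasurableSpace Y'] [BorelSpace Y'] [SeparableSpace Y'] [CompleteSpace Y']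
    (μ : ∀ n, Measure (X n)) (hμ : ∀ n, IsProbabilityMeasure (μ n))
    (ν : ∀ n, Measure (Y n)) (hν : ∀ n, IsProbabilityMeasure (ν n))
    (μ' : Measure X') [IsProbabilityMeasure μ'] (ν' : Measure Y') [IsProbabilityMeasure ν']
    (Fn : ℕ → ℝ≥0 → ℝ≥0 → ℝ≥0) (F : ℝ≥0 → ℝ≥0 → ℝ≥0)
    (hFn : ∀ n, IsMetricPreserving2 (Fn n)) (hF : IsMetricPreserving2 F)
    (hFnc : ∀ n, Continuous fun p : ℝ≥0 × ℝ≥0 => Fn n p.1 p.2)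
    (hFc : Continuous fun p : ℝ≥0 × ℝ≥0 => F p.1 p.2)
    (hpt : ∀ s t : ℝ≥0, Tendsto (fun n => Fn n s t) atTop (nhds (F s t)))
    (hX : Tendsto (fun n => boxDistD dist dist (μ n) μ') atTop (nhds 0))
    (hY : Tendsto (fun n => boxDistD dist dist (ν n) ν') atTop (nhds 0)) :
    Tendsto (fun n =>
      boxDistD (fun p q : X n × Y n => (Fn n (nndist p.1 q.1) (nndist p.2 q.2) : ℝ))
        (fun p q : X' × Y' => (F (nndist p.1 q.1) (nndist p.2 q.2) : ℝ))
        ((μ n).prod (ν n)) (μ'.prod ν')) atTop (nhds 0) := by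
  classical
  have hl : volume.restrict (Set.Ico (0:ℝ) 1) = BoxAux.leb01 := rfl
  have hnonneg : ∀ n, 0 ≤ boxDistD
      (fun p q : X n × Y n => (Fn n (nndist p.1 q.1) (nndist p.2 q.2) : ℝ))
      (fun p q : X' × Y' => (F (nndist p.1 q.1) (nndist p.2 q.2) : ℝ))
      ((μ n).prod (ν n)) (μ'.prod ν') := by
    intro n
    unfold boxDistD
    exact Real.sInf_nonneg fun x hx => hx.1
  rw [Metric.tendsto_atTop]
  intro ε hε
  set ε' : ℝ := min (ε/2) (1/2) with hε'def
  have hε'0 : 0 < ε' := lt_min (by linarith) (by norm_num)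
  have hε'le : ε' ≤ 1/2 := min_le_right _ _
  have hε'ε : ε' < ε := lt_of_le_of_lt (min_le_left _ _) (by linarith)
  suffices H : ∀ᶠ n in atTop, boxDistD
      (fun p q : X n × Y n => (Fn n (nndist p.1 q.1) (nndist p.2 q.2) : ℝ))
      (fun p q : X' × Y' => (F (nndist p.1 q.1) (nndist p.2 q.2) : ℝ))
      ((μ n).prod (ν n)) (μ'.prod ν') ≤ ε' by
    obtain ⟨N, hN⟩ := eventually_atTop.1 H
    refine ⟨N, fun n hn => ?_⟩
    rw [Real.dist_0_eq_abs, abs_of_nonneg (hnonneg n)]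
    exact lt_of_le_of_lt (hN n hn) hε'ε
  obtain ⟨δ₀, hδ₀pos, hδ₀⟩ := BoxAux.exists_small hFc (BoxAux.mp2_zero hF)
    (show (0:ℝ) < ε'/8 by linarith)
  have hδ₀pos' : (0:ℝ) < δ₀ := hδ₀pos
  have hX'ne : Nonempty X' := by
    by_contra h
    rw [not_nonempty_iff] at h
    have h1 : μ' Set.univ = 1 := measure_univ
    rw [Set.univ_eq_empty_iff.2 h] at h1
    simp at h1
  have hY'ne : Nonempty Y' := by
    by_contra h
    rw [not_nonempty_iff] at h
    have h1 : ν' Set.univ = 1 := measure_univ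
    rw [Set.univ_eq_empty_iff.2 h] at h1
    simp at h1
  obtain ⟨x₀⟩ := hX'ne
  obtain ⟨y₀⟩ := hY'ne
  obtain ⟨RX, hRX⟩ := BoxAux.exists_radius μ' x₀ (show 1 - ε'/8 < 1 by linarith)
  obtain ⟨RY, hRY⟩ := BoxAux.exists_radius ν' y₀ (show 1 - ε'/8 < 1 by linarith)
  set R : ℕ := max RX RY with hRdef
  have hRX' : ENNReal.ofReal (1 - ε'/8) ≤ μ' (Metric.closedBall x₀ R) :=
    le_trans hRX (measure_mono (Metric.closedBall_subset_closedBall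
      (by exact_mod_cast le_max_left RX RY)))
  have hRY' : ENNReal.ofReal (1 - ε'/8) ≤ ν' (Metric.closedBall y₀ R) :=
    le_trans hRY (measure_mono (Metric.closedBall_subset_closedBall
      (by exact_mod_cast le_max_right RX RY)))
  have E3 : ∀ᶠ n in atTop, |(Fn n δ₀ δ₀ : ℝ) - (F δ₀ δ₀ : ℝ)| < ε'/8 := by
    have h := NNReal.tendsto_coe.2 (hpt δ₀ δ₀)
    have h2 := h.eventually (Metric.ball_mem_nhds ((F δ₀ δ₀ : ℝ))
      (show (0:ℝ) < ε'/8 by linarith))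
    filter_upwards [h2] with n hn
    rwa [Real.dist_eq] at hn
  have E4 := BoxAux.unif hFn hF hFc hpt (2*(R:ℝ)) (show (0:ℝ) < ε'/2 by linarith)
  set η : ℝ := min ((δ₀:ℝ)) (ε'/8) with hηdef
  have hη0 : 0 < η := lt_min hδ₀pos' (by linarith)
  have E1 := hX.eventually_lt_const hη0
  have E2 := hY.eventually_lt_const hη0
  filter_upwards [E1, E2, E3, E4] with n h1 h2 h3 h4
  haveI := hμ n
  haveI := hν n
  obtain ⟨eX, heXη, heX0, φn, φ', hφn, hφ', hφnmap, hφ'map, IX, hIXsub, hIXmeas, hIXvol, hIXdist⟩ :=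
    BoxAux.exists_mem_box_lt dist dist (μ n) μ' h1
  obtain ⟨eY, heYη, heY0, ψn, ψ', hψn, hψ', hψnmap, hψ'map, IY, hIYsub, hIYmeas, hIYvol, hIYdist⟩ :=
    BoxAux.exists_mem_box_lt dist dist (ν n) ν' h2
  obtain ⟨T, hT, hTmap⟩ := BoxAux.exists_pairing
  rw [hl] at hφnmap hφ'map hψnmap hψ'map
  have heX8 : eX ≤ ε'/8 := le_of_lt (lt_of_lt_of_le heXη (min_le_right _ _))
  have heXδ : eX ≤ (δ₀:ℝ) := le_of_lt (lt_of_lt_of_le heXη (min_le_left _ _))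
  have heY8 : eY ≤ ε'/8 := le_of_lt (lt_of_lt_of_le heYη (min_le_right _ _))
  have heYδ : eY ≤ (δ₀:ℝ) := le_of_lt (lt_of_lt_of_le heYη (min_le_left _ _))
  set CX : Set ℝ := φ' ⁻¹' (Metric.closedBall x₀ R) with hCX
  set CY : Set ℝ := ψ' ⁻¹' (Metric.closedBall y₀ R) with hCY
  have hCXmeas : MeasurableSet CX := hφ' measurableSet_closedBall
  have hCYmeas : MeasurableSet CY := hψ' measurableSet_closedBall
  set A : Set ℝ := IX ∩ CX with hA
  set B : Set ℝ := IY ∩ CY with hB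
  have hAmeas : MeasurableSet A := hIXmeas.inter hCXmeas
  have hBmeas : MeasurableSet B := hIYmeas.inter hCYmeas
  have hABmeas : MeasurableSet (A ×ˢ B) := hAmeas.prod hBmeas
  set I₀ : Set ℝ := T ⁻¹' (A ×ˢ B) ∩ Set.Ico (0:ℝ) 1 with hI₀
  have hAvol : ENNReal.ofReal (1 - ε'/4) ≤ BoxAux.leb01 A := by
    have hIv : ENNReal.ofReal (1 - ε'/8) ≤ BoxAux.leb01 IX := by
      rw [BoxAux.leb01, Measure.restrict_apply' measurableSet_Ico,
        Set.inter_eq_left.2 hIXsub]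
      exact le_trans (ENNReal.ofReal_le_ofReal (by linarith)) hIXvol
    have hCv : ENNReal.ofReal (1 - ε'/8) ≤ BoxAux.leb01 CX := by
      rw [hCX, ← Measure.map_apply hφ' measurableSet_closedBall, hφ'map]
      exact hRX'
    have hib := BoxAux.inter_bound hCXmeas (show (0:ℝ) ≤ ε'/8 by linarith)
      (show (0:ℝ) ≤ ε'/8 by linarith) (by linarith) hIv hCv
    calc ENNReal.ofReal (1 - ε'/4) = ENNReal.ofReal (1 - ε'/8 - ε'/8) := by ring_nf
      _ ≤ _ := hib
  have hBvol : ENNReal.ofReal (1 - ε'/4) ≤ BoxAux.leb01 B := by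
    have hIv : ENNReal.ofReal (1 - ε'/8) ≤ BoxAux.leb01 IY := by
      rw [BoxAux.leb01, Measure.restrict_apply' measurableSet_Ico,
        Set.inter_eq_left.2 hIYsub]
      exact le_trans (ENNReal.ofReal_le_ofReal (by linarith)) hIYvol
    have hCv : ENNReal.ofReal (1 - ε'/8) ≤ BoxAux.leb01 CY := by
      rw [hCY, ← Measure.map_apply hψ' measurableSet_closedBall, hψ'map]
      exact hRY'
    have hib := BoxAux.inter_bound hCYmeas (show (0:ℝ) ≤ ε'/8 by linarith)
      (show (0:ℝ) ≤ ε'/8 by linarith) (by linarith) hIv hCv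
    calc ENNReal.ofReal (1 - ε'/4) = ENNReal.ofReal (1 - ε'/8 - ε'/8) := by ring_nf
      _ ≤ _ := hib
  have hI₀vol : volume I₀ = BoxAux.leb01 A * BoxAux.leb01 B := by
    rw [hI₀, ← Measure.restrict_apply' measurableSet_Ico, hl,
      ← Measure.map_apply hT hABmeas, hTmap, Measure.prod_prod]
  unfold boxDistD
  apply csInf_le ⟨0, fun x hx => hx.1⟩
  refine ⟨le_of_lt hε'0, (fun s => (φn (T s).1, ψn (T s).2)),
    (fun s => (φ' (T s).1, ψ' (T s).2)),
    (hφn.comp hT.fst).prodMk (hψn.comp hT.snd),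
    (hφ'.comp hT.fst).prodMk (hψ'.comp hT.snd), ?_, ?_, I₀,
    Set.inter_subset_right, (hT hABmeas).inter measurableSet_Ico, ?_, ?_⟩
  · rw [hl]
    have hcomp : (fun s : ℝ => (φn (T s).1, ψn (T s).2)) = (Prod.map φn ψn) ∘ T := rfl
    rw [hcomp, ← Measure.map_map (hφn.prodMap hψn) hT, hTmap,
      ← Measure.map_prod_map _ _ hφn hψn, hφnmap, hψnmap]
  · rw [hl]
    have hcomp : (fun s : ℝ => (φ' (T s).1, ψ' (T s).2)) = (Prod.map φ' ψ') ∘ T := rfl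
    rw [hcomp, ← Measure.map_map (hφ'.prodMap hψ') hT, hTmap,
      ← Measure.map_prod_map _ _ hφ' hψ', hφ'map, hψ'map]
  · calc ENNReal.ofReal (1 - ε')
        ≤ ENNReal.ofReal ((1-ε'/4)*(1-ε'/4)) := ENNReal.ofReal_le_ofReal (by nlinarith)
      _ = ENNReal.ofReal (1-ε'/4) * ENNReal.ofReal (1-ε'/4) :=
          ENNReal.ofReal_mul (by linarith)
      _ ≤ BoxAux.leb01 A * BoxAux.leb01 B := mul_le_mul' hAvol hBvol
      _ = volume I₀ := hI₀vol.symm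
  · intro s hs t ht
    have hsu : (T s).1 ∈ A := ((Set.mem_prod).1 hs.1).1
    have hsv : (T s).2 ∈ B := ((Set.mem_prod).1 hs.1).2
    have htu : (T t).1 ∈ A := ((Set.mem_prod).1 ht.1).1
    have htv : (T t).2 ∈ B := ((Set.mem_prod).1 ht.1).2
    have hbX : |dist (φn (T s).1) (φn (T t).1) - dist (φ' (T s).1) (φ' (T t).1)| ≤ eX :=
      hIXdist _ hsu.1 _ htu.1
    have hbY : |dist (ψn (T s).2) (ψn (T t).2) - dist (ψ' (T s).2) (ψ' (T t).2)| ≤ eY :=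
      hIYdist _ hsv.1 _ htv.1
    have hd2RX : dist (φ' (T s).1) (φ' (T t).1) ≤ 2*(R:ℝ) := by
      have hx1 : dist (φ' (T s).1) x₀ ≤ R := Metric.mem_closedBall.1 hsu.2
      have hx2 : dist (φ' (T t).1) x₀ ≤ R := Metric.mem_closedBall.1 htu.2
      calc dist (φ' (T s).1) (φ' (T t).1)
          ≤ dist (φ' (T s).1) x₀ + dist x₀ (φ' (T t).1) := dist_triangle _ _ _
        _ ≤ 2*(R:ℝ) := by rw [dist_comm x₀]; linarith
    have hd2RY : dist (ψ' (T s).2) (ψ' (T t).2) ≤ 2*(R:ℝ) := by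
      have hx1 : dist (ψ' (T s).2) y₀ ≤ R := Metric.mem_closedBall.1 hsv.2
      have hx2 : dist (ψ' (T t).2) y₀ ≤ R := Metric.mem_closedBall.1 htv.2
      calc dist (ψ' (T s).2) (ψ' (T t).2)
          ≤ dist (ψ' (T s).2) y₀ + dist y₀ (ψ' (T t).2) := dist_triangle _ _ _
        _ ≤ 2*(R:ℝ) := by rw [dist_comm y₀]; linarith
    set a₁ := nndist (φn (T s).1) (φn (T t).1) with ha₁
    set a₂ := nndist (φ' (T s).1) (φ' (T t).1) with ha₂
    set b₁ := nndist (ψn (T s).2) (ψn (T t).2) with hb₁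
    set b₂ := nndist (ψ' (T s).2) (ψ' (T t).2) with hb₂
    have hna : nndist ((a₁:ℝ)) ((a₂:ℝ)) ≤ 2 * δ₀ := by
      rw [← NNReal.coe_le_coe, coe_nndist, Real.dist_eq]
      push_cast
      rw [ha₁, ha₂, coe_nndist, coe_nndist]
      have := le_trans hbX heXδ
      linarith [abs_le.1 this]
    have hnb : nndist ((b₁:ℝ)) ((b₂:ℝ)) ≤ 2 * δ₀ := by
      rw [← NNReal.coe_le_coe, coe_nndist, Real.dist_eq]
      push_cast
      rw [hb₁, hb₂, coe_nndist, coe_nndist]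
      have := le_trans hbY heYδ
      linarith [abs_le.1 this]
    have t1 : |(Fn n a₁ b₁ : ℝ) - (Fn n a₂ b₂ : ℝ)| ≤ 2 * (Fn n δ₀ δ₀ : ℝ) :=
      BoxAux.mp2_abs_sub (hFn n) a₁ a₂ b₁ b₂ δ₀ δ₀ hna hnb
    have hFnδ : (Fn n δ₀ δ₀ : ℝ) < ε'/4 := by
      rw [abs_sub_lt_iff] at h3
      linarith [h3.1, h3.2]
    have hc2 : (a₂:ℝ) ≤ 2*(R:ℝ) := by rw [ha₂, coe_nndist]; exact hd2RX
    have hc2' : (b₂:ℝ) ≤ 2*(R:ℝ) := by rw [hb₂, coe_nndist]; exact hd2RY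
    have t2 : |(Fn n a₂ b₂ : ℝ) - (F a₂ b₂ : ℝ)| ≤ ε'/2 := h4 a₂ b₂ hc2 hc2'
    have tri := abs_sub_le ((Fn n a₁ b₁ : ℝ)) ((Fn n a₂ b₂ : ℝ)) ((F a₂ b₂ : ℝ))
    show |(Fn n a₁ b₁ : ℝ) - (F a₂ b₂ : ℝ)| ≤ ε'
    linarith
end
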